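/- arXiv:2508.12273 — 6 statements merged into one kernel-verified Lean document; each statement's English description precedes it below -/
import Mathlib

section
/- Let n ≥ 2, r > 0, and let h : S^{n−1} × ℝ → ℂ be measurable with L := ∫_{S^{n−1}} (esssup_{b∈ℝ} |h(w,b)|) dσ_{n−1}(w) < ∞. Suppose f : ℝⁿ → ℂ satisfies f(x) = ∫_{S^{n−1}} ∫_{−r}^{r} h(w,b) · 1[⟨w,x⟩ > b] db dσ_{n−1}(w) for every x with |x| ≤ r. Then f is Lipschitz on the closed ball of radius r with Lipschitz constant L: |f(x) − f(u)| ≤ L·|x − u| whenever |x| ≤ r and |u| ≤ r. -/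
open MeasureTheory Set
open scoped ENNReal NNReal RealInnerProductSpace

/-- If `f(x) = ∫_{S^{n−1}} ∫_{−r}^{r} h(w,b)·1[⟨w,x⟩ > b] db dσ(w)` on the ball of radius `r`
and `L = ∫_{S^{n−1}} esssup_b |h(w,b)| dσ(w) < ∞`, then `f` is `L`-Lipschitz on that ball. -/
theorem lipschitz_of_dualRadon_rep (n : ℕ) (hn : 2 ≤ n) (r : ℝ) (hr : 0 < r)
    (h : Metric.sphere (0 : EuclideanSpace ℝ (Fin n)) 1 → ℝ → ℂ)
    (hmeas : Measurable (Function.uncurry h))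
    (hfin : (∫⁻ w, essSup (fun b : ℝ => (‖h w b‖₊ : ℝ≥0∞)) volume
        ∂(volume : Measure (EuclideanSpace ℝ (Fin n))).toSphere) < ⊤)
    (f : EuclideanSpace ℝ (Fin n) → ℂ)
    (hf : ∀ x : EuclideanSpace ℝ (Fin n), ‖x‖ ≤ r →
      f x = ∫ w, (∫ b in Icc (-r) r,
          h w b * (if (⟪(w : EuclideanSpace ℝ (Fin n)), x⟫ : ℝ) > b then 1 else 0))
        ∂(volume : Measure (EuclideanSpace ℝ (Fin n))).toSphere) :
    ∀ x u : EuclideanSpace ℝ (Fin n), ‖x‖ ≤ r → ‖u‖ ≤ r →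
      ‖f x - f u‖ ≤
        (∫⁻ w, essSup (fun b : ℝ => (‖h w b‖₊ : ℝ≥0∞)) volume
          ∂(volume : Measure (EuclideanSpace ℝ (Fin n))).toSphere).toReal * ‖x - u‖ := by
  intro x u hx hu
  set μ := (volume : Measure (EuclideanSpace ℝ (Fin n))).toSphere with hμdef
  set M : Metric.sphere (0 : EuclideanSpace ℝ (Fin n)) 1 → ℝ≥0∞ :=
    fun w => essSup (fun b : ℝ => (‖h w b‖₊ : ℝ≥0∞)) volume with hMdef
  by_cases hxu : x = u
  · subst hxu; simp
  -- the inner-integral family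
  set F : EuclideanSpace ℝ (Fin n) → Metric.sphere (0 : EuclideanSpace ℝ (Fin n)) 1 → ℂ := fun y w =>
    ∫ b in Icc (-r) r, h w b * (if (⟪(w : EuclideanSpace ℝ (Fin n)), y⟫ : ℝ) > b then 1 else 0) with hFdef
  -- measurability in w
  have hsm : ∀ y : EuclideanSpace ℝ (Fin n), StronglyMeasurable (F y) := by
    intro y
    apply MeasureTheory.StronglyMeasurable.integral_prod_right'
      (f := fun p : Metric.sphere (0 : EuclideanSpace ℝ (Fin n)) 1 × ℝ =>
        h p.1 p.2 * (if (⟪(p.1 : EuclideanSpace ℝ (Fin n)), y⟫ : ℝ) > p.2 then 1 else 0))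
    apply Measurable.stronglyMeasurable
    apply hmeas.mul
    have hset : MeasurableSet {p : Metric.sphere (0 : EuclideanSpace ℝ (Fin n)) 1 × ℝ | (⟪(p.1 : EuclideanSpace ℝ (Fin n)), y⟫ : ℝ) > p.2} := by
      apply measurableSet_lt measurable_snd
      exact ((continuous_subtype_val.comp continuous_fst).inner continuous_const).measurable
    exact Measurable.ite hset measurable_const measurable_const
  -- measurability of each slice in b
  have hmb : ∀ (w : Metric.sphere (0 : EuclideanSpace ℝ (Fin n)) 1) (y : EuclideanSpace ℝ (Fin n)),
      Measurable (fun b : ℝ => h w b * (if (⟪(w : EuclideanSpace ℝ (Fin n)), y⟫ : ℝ) > b then 1 else 0)) := by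
    intro w y
    have h1 : Measurable (fun b : ℝ => h w b) := hmeas.comp (measurable_prodMk_left (x := w))
    apply h1.mul
    exact Measurable.ite measurableSet_Iio measurable_const measurable_const
  -- a pointwise ℝ≥0∞ bound for integrability
  have hFbound : ∀ y : EuclideanSpace ℝ (Fin n), ∀ w, (‖F y w‖₊ : ℝ≥0∞) ≤ M w * ENNReal.ofReal (2 * r) := by
    intro y w
    calc (‖F y w‖₊ : ℝ≥0∞)
        ≤ ∫⁻ b in Icc (-r) r, ‖h w b * (if (⟪(w : EuclideanSpace ℝ (Fin n)), y⟫ : ℝ) > b then 1 else 0)‖₊ :=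
          enorm_integral_le_lintegral_enorm _
      _ ≤ ∫⁻ b in Icc (-r) r, (‖h w b‖₊ : ℝ≥0∞) := by
          apply lintegral_mono
          intro b
          show (‖h w b * (if (⟪(w : EuclideanSpace ℝ (Fin n)), y⟫ : ℝ) > b then 1 else 0)‖₊ : ℝ≥0∞)
            ≤ (‖h w b‖₊ : ℝ≥0∞)
          rcases le_or_gt ((⟪(w : EuclideanSpace ℝ (Fin n)), y⟫ : ℝ)) b with hc | hc
          · rw [if_neg (not_lt.mpr hc), mul_zero]
            simp
          · rw [if_pos hc, mul_one]
      _ ≤ ∫⁻ _ in Icc (-r) r, M w := by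
          apply lintegral_mono_ae
          exact ae_restrict_of_ae (ENNReal.ae_le_essSup (fun b : ℝ => (‖h w b‖₊ : ℝ≥0∞)))
      _ = M w * ENNReal.ofReal (2 * r) := by
          rw [setLIntegral_const, Real.volume_Icc]
          ring_nf
      _ ≤ M w * ENNReal.ofReal (2 * r) := le_rfl
  -- integrability over the sphere
  have hInt : ∀ y : EuclideanSpace ℝ (Fin n), Integrable (F y) μ := by
    intro y
    refine ⟨(hsm y).aestronglyMeasurable, ?_⟩
    show (∫⁻ w, (‖F y w‖₊ : ℝ≥0∞) ∂μ) < ⊤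
    calc ∫⁻ w, (‖F y w‖₊ : ℝ≥0∞) ∂μ ≤ ∫⁻ w, M w * ENNReal.ofReal (2 * r) ∂μ :=
          lintegral_mono (hFbound y)
      _ = (∫⁻ w, M w ∂μ) * ENNReal.ofReal (2 * r) :=
          lintegral_mul_const' _ _ ENNReal.ofReal_ne_top
      _ < ⊤ := ENNReal.mul_lt_top hfin ENNReal.ofReal_lt_top
  -- the key pointwise Lipschitz bound
  have hkey : ∀ w, (‖F x w - F u w‖₊ : ℝ≥0∞) ≤ M w * ENNReal.ofReal ‖x - u‖ := by
    intro w
    by_cases hMw : M w = ⊤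
    · rw [hMw, ENNReal.top_mul]
      · exact le_top
      · simp only [ne_eq, ENNReal.ofReal_eq_zero, not_le]
        rw [norm_pos_iff, sub_ne_zero]
        exact hxu
    -- finite essential sup
    set a : ℝ := ⟪(w : EuclideanSpace ℝ (Fin n)), x⟫ with hadef
    set c : ℝ := ⟪(w : EuclideanSpace ℝ (Fin n)), u⟫ with hcdef
    have hac : |a - c| ≤ ‖x - u‖ := by
      have h1 : a - c = ⟪(w : EuclideanSpace ℝ (Fin n)), x - u⟫ := (inner_sub_right _ _ _).symm
      rw [h1]
      have h2 : ‖(w : EuclideanSpace ℝ (Fin n))‖ = 1 := norm_eq_of_mem_sphere w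
      calc |(⟪(w : EuclideanSpace ℝ (Fin n)), x - u⟫ : ℝ)| ≤ ‖(w : EuclideanSpace ℝ (Fin n))‖ * ‖x - u‖ := abs_real_inner_le_norm _ _
        _ = ‖x - u‖ := by rw [h2, one_mul]
    have hbb : ∀ᵐ b ∂(volume.restrict (Icc (-r) r)), ‖h w b‖ ≤ (M w).toReal := by
      filter_upwards [ae_restrict_of_ae (ENNReal.ae_le_essSup (fun b : ℝ => (‖h w b‖₊ : ℝ≥0∞)))] with b hb
      have := ENNReal.toReal_mono hMw hb
      simpa using this
    have hvolIcc : volume (Icc (-r) r) < ⊤ := measure_Icc_lt_top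
    have hintb : ∀ y : EuclideanSpace ℝ (Fin n),
        Integrable (fun b : ℝ => h w b * (if (⟪(w : EuclideanSpace ℝ (Fin n)), y⟫ : ℝ) > b then 1 else 0))
          (volume.restrict (Icc (-r) r)) := by
      intro y
      apply Integrable.mono' (g := fun _ : ℝ => (M w).toReal)
        (integrableOn_const hvolIcc.ne)
        ((hmb w y).aestronglyMeasurable)
      filter_upwards [hbb] with b hb
      rcases le_or_gt ((⟪(w : EuclideanSpace ℝ (Fin n)), y⟫ : ℝ)) b with hc | hc
      · rw [if_neg (not_lt.mpr hc), mul_zero, norm_zero]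
        exact ENNReal.toReal_nonneg
      · rw [if_pos hc, mul_one]
        exact hb
    have hdiff : F x w - F u w = ∫ b in Icc (-r) r,
        (h w b * (if a > b then 1 else 0) - h w b * (if c > b then 1 else 0)) :=
      (integral_sub (hintb x) (hintb u)).symm
    set m₀ : ℝ := min a c
    set m₁ : ℝ := max a c
    set g : ℝ → ℝ := fun b => (M w).toReal * (Set.Ico m₀ m₁).indicator (fun _ => (1 : ℝ)) b with hgdef
    have hg_int : Integrable g (volume.restrict (Icc (-r) r)) := by
      apply Integrable.const_mul
      rw [integrable_indicator_iff measurableSet_Ico]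
      refine integrableOn_const (ne_of_lt ?_)
      rw [Measure.restrict_apply measurableSet_Ico]
      exact lt_of_le_of_lt (measure_mono inter_subset_left) measure_Ico_lt_top
    have hnorm_le : ‖F x w - F u w‖ ≤ (M w).toReal * ‖x - u‖ := by
      rw [hdiff]
      calc ‖∫ b in Icc (-r) r,
            (h w b * (if a > b then 1 else 0) - h w b * (if c > b then 1 else 0))‖
          ≤ ∫ b in Icc (-r) r,
            ‖h w b * (if a > b then 1 else 0) - h w b * (if c > b then 1 else 0)‖ :=
            norm_integral_le_integral_norm _
        _ ≤ ∫ b in Icc (-r) r, g b := by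
            apply integral_mono_ae ((hintb x).sub (hintb u)).norm hg_int
            filter_upwards [hbb] with b hb
            have hnn : (0:ℝ) ≤ (M w).toReal * (Set.Ico m₀ m₁).indicator (fun _ => (1:ℝ)) b :=
              mul_nonneg ENNReal.toReal_nonneg (Set.indicator_nonneg (fun _ _ => zero_le_one) b)
            show ‖h w b * (if a > b then 1 else 0) - h w b * (if c > b then 1 else 0)‖
              ≤ (M w).toReal * (Set.Ico m₀ m₁).indicator (fun _ => (1:ℝ)) b
            by_cases h1 : a > b <;> by_cases h2 : c > b
            · rw [if_pos h1, if_pos h2, sub_self, norm_zero]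
              exact hnn
            · have hmem : b ∈ Set.Ico m₀ m₁ :=
                ⟨le_trans (min_le_right a c) (not_lt.mp h2), lt_of_lt_of_le h1 (le_max_left a c)⟩
              rw [if_pos h1, if_neg h2, mul_one, mul_zero, sub_zero,
                Set.indicator_of_mem hmem, mul_one]
              exact hb
            · have hmem : b ∈ Set.Ico m₀ m₁ :=
                ⟨le_trans (min_le_left a c) (not_lt.mp h1), lt_of_lt_of_le h2 (le_max_right a c)⟩
              rw [if_neg h1, if_pos h2, mul_one, mul_zero, zero_sub, norm_neg,
                Set.indicator_of_mem hmem, mul_one]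
              exact hb
            · rw [if_neg h1, if_neg h2, mul_zero, sub_self, norm_zero]
              exact hnn
        _ = (M w).toReal * ((volume.restrict (Icc (-r) r)) (Set.Ico m₀ m₁)).toReal := by
            rw [hgdef]
            rw [integral_const_mul, integral_indicator_const _ measurableSet_Ico]
            simp
            exact Or.inl rfl
        _ ≤ (M w).toReal * ‖x - u‖ := by
            apply mul_le_mul_of_nonneg_left _ ENNReal.toReal_nonneg
            have h1 : (volume.restrict (Icc (-r) r)) (Set.Ico m₀ m₁) ≤ volume (Set.Ico m₀ m₁) := by
              rw [Measure.restrict_apply measurableSet_Ico]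
              exact measure_mono inter_subset_left
            have h2 : (volume (Set.Ico m₀ m₁)).toReal = m₁ - m₀ := by
              rw [Real.volume_Ico, ENNReal.toReal_ofReal (sub_nonneg.mpr (min_le_max))]
            calc ((volume.restrict (Icc (-r) r)) (Set.Ico m₀ m₁)).toReal
                ≤ (volume (Set.Ico m₀ m₁)).toReal :=
                  ENNReal.toReal_mono (by rw [Real.volume_Ico]; exact ENNReal.ofReal_ne_top) h1
              _ = m₁ - m₀ := h2
              _ = |a - c| := by rw [max_sub_min_eq_abs, abs_sub_comm]
              _ ≤ ‖x - u‖ := hac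
    calc (‖F x w - F u w‖₊ : ℝ≥0∞) = ENNReal.ofReal ‖F x w - F u w‖ :=
          (ofReal_norm _).symm
      _ ≤ ENNReal.ofReal ((M w).toReal * ‖x - u‖) := ENNReal.ofReal_le_ofReal hnorm_le
      _ = M w * ENNReal.ofReal ‖x - u‖ := by
          rw [ENNReal.ofReal_mul ENNReal.toReal_nonneg, ENNReal.ofReal_toReal hMw]
  -- assemble
  rw [hf x hx, hf u hu, ← integral_sub (hInt x) (hInt u)]
  calc ‖∫ w, (F x w - F u w) ∂μ‖
      ≤ (∫⁻ w, ENNReal.ofReal ‖F x w - F u w‖ ∂μ).toReal := norm_integral_le_lintegral_norm _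
    _ ≤ ((∫⁻ w, M w ∂μ) * ENNReal.ofReal ‖x - u‖).toReal := by
        apply ENNReal.toReal_mono (ENNReal.mul_ne_top hfin.ne ENNReal.ofReal_ne_top)
        rw [← lintegral_mul_const' _ _ ENNReal.ofReal_ne_top]
        apply lintegral_mono
        intro w
        show ENNReal.ofReal ‖F x w - F u w‖ ≤ M w * ENNReal.ofReal ‖x - u‖
        rw [show ENNReal.ofReal ‖F x w - F u w‖ = (‖F x w - F u w‖₊ : ℝ≥0∞) from
          ofReal_norm _]
        exact hkey w
    _ = (∫⁻ w, M w ∂μ).toReal * ‖x - u‖ := by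
        rw [ENNReal.toReal_mul, ENNReal.toReal_ofReal (norm_nonneg _)]
end

section
/- Let n ≥ 2, let α ≥ 1 be an integer, let r > 0, and let g : S^{n−1} × ℝ → ℂ be measurable with ‖g‖_{1,∞} < ∞. Define g∘(θ,t) := 1[t ≤ r] · ∫_ℝ g(θ,b) · 1[b ≥ −r] · 1[t > b] · (t − b)^{α−1}/(α−1)! db. Then ‖g∘‖_{1,∞} ≤ ‖g‖_{1,∞} · (2r)^α/α!. -/
open MeasureTheory Set
open scoped ENNReal NNReal

/-- `‖g∘‖_{1,∞} ≤ ‖g‖_{1,∞}·(2r)^α/α!` where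
`g∘(θ,t) = 1[t ≤ r]·∫_ℝ g(θ,b)·1[b ≥ −r]·1[t > b]·(t−b)^{α−1}/(α−1)! db`. -/
theorem mixedNorm_truncated_convolution_le (n α : ℕ) (hn : 2 ≤ n) (hα : 1 ≤ α)
    (r : ℝ) (hr : 0 < r)
    (g : Metric.sphere (0 : EuclideanSpace ℝ (Fin n)) 1 → ℝ → ℂ)
    (hmeas : Measurable (Function.uncurry g))
    (hgfin : (∫⁻ θ, essSup (fun t : ℝ => (‖g θ t‖₊ : ℝ≥0∞)) volume
        ∂(volume : Measure (EuclideanSpace ℝ (Fin n))).toSphere) < ⊤) :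
    (∫⁻ θ, essSup (fun t : ℝ =>
          (‖(if t ≤ r then
              ∫ b : ℝ, g θ b * (if b ≥ -r then 1 else 0) * (if t > b then 1 else 0) *
                (((t - b) ^ (α - 1) : ℝ) / ((α - 1).factorial : ℝ))
            else 0)‖₊ : ℝ≥0∞)) volume
        ∂(volume : Measure (EuclideanSpace ℝ (Fin n))).toSphere)
      ≤ (∫⁻ θ, essSup (fun t : ℝ => (‖g θ t‖₊ : ℝ≥0∞)) volume
          ∂(volume : Measure (EuclideanSpace ℝ (Fin n))).toSphere)
        * ENNReal.ofReal ((2 * r) ^ α / (α.factorial : ℝ)) := by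
  obtain ⟨m, rfl⟩ := Nat.exists_eq_add_of_le' hα
  simp only [Nat.add_sub_cancel]
  set C : ℝ := (2 * r) ^ (m + 1) / ((m + 1).factorial : ℝ) with hCdef
  have hC : 0 < C := div_pos (pow_pos (by linarith) _) (by positivity)
  have key : ∀ θ, essSup (fun t : ℝ =>
      (‖(if t ≤ r then
          ∫ b : ℝ, g θ b * (if b ≥ -r then 1 else 0) * (if t > b then 1 else 0) *
            (((t - b) ^ m : ℝ) / ((m).factorial : ℝ))
        else 0)‖₊ : ℝ≥0∞)) volume
      ≤ essSup (fun t : ℝ => (‖g θ t‖₊ : ℝ≥0∞)) volume * ENNReal.ofReal C := by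
    intro θ
    set M : ℝ≥0∞ := essSup (fun t : ℝ => (‖g θ t‖₊ : ℝ≥0∞)) volume with hMdef
    by_cases hM : M = ⊤
    · rw [hM, ENNReal.top_mul (ENNReal.ofReal_pos.2 hC).ne']
      exact le_top
    -- M finite
    set Mr : ℝ := M.toReal with hMr
    have hMr0 : 0 ≤ Mr := ENNReal.toReal_nonneg
    have hbd : ∀ᵐ b : ℝ, ‖g θ b‖ ≤ Mr := by
      filter_upwards [ae_le_essSup (f := fun t : ℝ => (‖g θ t‖₊ : ℝ≥0∞))] with b hb
      have := ENNReal.toReal_mono hM hb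
      simpa using this
    refine essSup_le_of_ae_le _ ?_
    filter_upwards with t
    by_cases ht : t ≤ r
    swap
    · simp [ht]
    simp only [ht, if_true]
    -- real bound
    have hreal : ‖∫ b : ℝ, g θ b * (if b ≥ -r then 1 else 0) * (if t > b then 1 else 0) *
        (((t - b) ^ m : ℝ) / ((m).factorial : ℝ))‖ ≤ Mr * C := by
      by_cases hrt : -r ≤ t
      · -- main case
        set G : ℝ → ℝ := (Icc (-r) t).indicator
          (fun b => Mr * ((t - b) ^ m / ((m).factorial : ℝ))) with hGdef
        have hGnn : ∀ b, 0 ≤ G b := by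
          intro b
          apply Set.indicator_nonneg
          intro x hx
          have : 0 ≤ t - x := by linarith [hx.2]
          positivity
        have hGint : Integrable G := by
          rw [hGdef, integrable_indicator_iff measurableSet_Icc]
          exact (by continuity : Continuous fun b : ℝ =>
            Mr * ((t - b) ^ m / ((m).factorial : ℝ))).integrableOn_Icc
        have hle : ‖∫ b : ℝ, g θ b * (if b ≥ -r then 1 else 0) * (if t > b then 1 else 0) *
            (((t - b) ^ m : ℝ) / ((m).factorial : ℝ))‖ ≤ ∫ b : ℝ, G b := by
          apply norm_integral_le_of_norm_le hGint
          filter_upwards [hbd] with b hb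
          by_cases hb1 : b ≥ -r
          · by_cases hb2 : t > b
            · have hbIcc : b ∈ Icc (-r) t := ⟨hb1, le_of_lt hb2⟩
              have htb : 0 ≤ t - b := by linarith
              rw [hGdef]
              rw [Set.indicator_of_mem hbIcc]
              simp only [hb1, hb2, if_true, mul_one]
              rw [norm_mul]
              have : ‖(((t - b) ^ m : ℝ) / ((m).factorial : ℝ) : ℂ)‖
                  = (t - b) ^ m / ((m).factorial : ℝ) := by
                rw [norm_div, Complex.norm_real, Complex.norm_real,
                  Real.norm_of_nonneg (by positivity : (0:ℝ) ≤ (t - b) ^ m),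
                  Real.norm_of_nonneg (by positivity : (0:ℝ) ≤ ((m).factorial : ℝ))]
              rw [this]
              apply mul_le_mul_of_nonneg_right hb (by positivity)
            · simp [hb2, hGnn b]
          · simp [hb1, hGnn b]
        have hGval : ∫ b : ℝ, G b = Mr * ((t + r) ^ (m + 1) / ((m + 1).factorial : ℝ)) := by
          rw [hGdef, integral_indicator measurableSet_Icc,
            integral_Icc_eq_integral_Ioc, ← intervalIntegral.integral_of_le hrt]
          have h1 : ∫ b in (-r)..t, Mr * ((t - b) ^ m / ((m).factorial : ℝ))
              = (Mr / ((m).factorial : ℝ)) * ∫ b in (-r)..t, (t - b) ^ m := by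
            rw [← intervalIntegral.integral_const_mul]
            congr 1
            ext b
            ring
          rw [h1]
          have h2 : ∫ b in (-r)..t, (t - b) ^ m = ∫ u in (t - t)..(t - (-r)), u ^ m :=
            intervalIntegral.integral_comp_sub_left (fun u : ℝ => u ^ m) t
          rw [h2]
          simp only [sub_self, sub_neg_eq_add]
          rw [integral_pow]
          have hm : ((m + 1).factorial : ℝ) = ((m + 1 : ℕ) : ℝ) * ((m).factorial : ℝ) := by
            rw [Nat.factorial_succ]
            push_cast
            ring
          have hmne : ((m).factorial : ℝ) ≠ 0 := by positivity
          rw [hm]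
          rw [zero_pow (Nat.succ_ne_zero m)]
          push_cast
          have h3 : ((m : ℝ) + 1) ≠ 0 := by positivity
          field_simp
          ring
        calc ‖∫ b : ℝ, g θ b * (if b ≥ -r then 1 else 0) * (if t > b then 1 else 0) *
            (((t - b) ^ m : ℝ) / ((m).factorial : ℝ))‖ ≤ ∫ b : ℝ, G b := hle
          _ = Mr * ((t + r) ^ (m + 1) / ((m + 1).factorial : ℝ)) := hGval
          _ ≤ Mr * C := by
              apply mul_le_mul_of_nonneg_left _ hMr0
              apply div_le_div_of_nonneg_right _ (by positivity)
              · exact pow_le_pow_left₀ (by linarith) (by linarith) _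
      · -- t < -r : integrand vanishes
        have hz : ∀ b : ℝ, g θ b * (if b ≥ -r then 1 else 0) * (if t > b then 1 else 0) *
            (((t - b) ^ m : ℝ) / ((m).factorial : ℝ)) = 0 := by
          intro b
          by_cases hb1 : b ≥ -r
          · have : ¬ t > b := by push_neg; push_neg at hrt; linarith
            simp [this]
          · simp [hb1]
        simp only [hz, integral_zero, norm_zero]
        positivity
    calc (‖∫ b : ℝ, g θ b * (if b ≥ -r then 1 else 0) * (if t > b then 1 else 0) *
        (((t - b) ^ m : ℝ) / ((m).factorial : ℝ))‖₊ : ℝ≥0∞)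
        = ENNReal.ofReal ‖∫ b : ℝ, g θ b * (if b ≥ -r then 1 else 0) * (if t > b then 1 else 0) *
          (((t - b) ^ m : ℝ) / ((m).factorial : ℝ))‖ := by rw [ENNReal.ofReal, norm_toNNReal]
      _ ≤ ENNReal.ofReal (Mr * C) := ENNReal.ofReal_le_ofReal hreal
      _ = ENNReal.ofReal Mr * ENNReal.ofReal C := ENNReal.ofReal_mul hMr0
      _ = M * ENNReal.ofReal C := by rw [hMr, ENNReal.ofReal_toReal hM]
  calc (∫⁻ θ, essSup (fun t : ℝ =>
        (‖(if t ≤ r then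
            ∫ b : ℝ, g θ b * (if b ≥ -r then 1 else 0) * (if t > b then 1 else 0) *
              (((t - b) ^ m : ℝ) / ((m).factorial : ℝ))
          else 0)‖₊ : ℝ≥0∞)) volume
        ∂(volume : Measure (EuclideanSpace ℝ (Fin n))).toSphere)
      ≤ ∫⁻ θ, essSup (fun t : ℝ => (‖g θ t‖₊ : ℝ≥0∞)) volume * ENNReal.ofReal C
        ∂(volume : Measure (EuclideanSpace ℝ (Fin n))).toSphere := lintegral_mono key
    _ = (∫⁻ θ, essSup (fun t : ℝ => (‖g θ t‖₊ : ℝ≥0∞)) volume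
        ∂(volume : Measure (EuclideanSpace ℝ (Fin n))).toSphere) * ENNReal.ofReal C :=
      lintegral_mul_const' _ _ ENNReal.ofReal_ne_top
end

section
/- Let n ≥ 2, ℓ ≥ 0 and α ≥ 0 be integers, and define N : ℝ → ℂ by N(y) := Γ((n+ℓ−iy)/2) · Γ((2−ℓ−iy)/2) · Γ(1−iy) / ( 2 π^{(n−1)/2} · Γ((2−iy)/2) · Γ((1−iy)/2) · Γ(1−iy−α) ), where Γ is the complex Gamma function. Then |N(y)| / ( (1/2) |y|^α (|y|/(2π))^{(n−1)/2} ) → 1 as y → +∞ and as y → −∞. -/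
open Filter Complex
open scoped Topology Real



lemma norm_sq_cast (z : ℂ) : (‖z‖ ^ 2 : ℂ) = z * (starRingEnd ℂ) z := by
  rw [Complex.mul_conj, Complex.normSq_eq_norm_sq]
  norm_cast

-- norm squared of Gamma(1 - it)
lemma F1 (t : ℝ) (ht : t ≠ 0) :
    ‖Complex.Gamma (1 - Complex.I * t)‖ ^ 2 = Real.pi * t / Real.sinh (Real.pi * t) := by
  have hI : Complex.I * (t:ℂ) ≠ 0 := by
    simp [Complex.ext_iff, ht]
  have hconj : (starRingEnd ℂ) (1 - Complex.I * t) = 1 + Complex.I * t := by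
    simp [map_sub, map_mul, Complex.conj_I, Complex.conj_ofReal]
  have h0 : (‖Complex.Gamma (1 - Complex.I * t)‖ ^ 2 : ℂ)
      = Complex.Gamma (1 - Complex.I * t) * Complex.Gamma (1 + Complex.I * t) := by
    rw [norm_sq_cast, ← Complex.Gamma_conj, hconj]
  have h1 : Complex.Gamma (1 + Complex.I * t) = (Complex.I * t) * Complex.Gamma (Complex.I * t) := by
    rw [add_comm, Complex.Gamma_add_one _ hI]
  have h2 : Complex.Gamma (1 - Complex.I * t) * Complex.Gamma (Complex.I * t)
      = (π : ℂ) / Complex.sin (π * (1 - Complex.I * t)) := by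
    have := Complex.Gamma_mul_Gamma_one_sub (1 - Complex.I * t)
    simpa using this
  have hsin : Complex.sin ((π:ℂ) * (1 - Complex.I * t)) = (Real.sinh (π * t) : ℝ) * Complex.I := by
    have : (π:ℂ) * (1 - Complex.I * t) = π - (π * t : ℝ) * Complex.I := by push_cast; ring
    rw [this, Complex.sin_pi_sub, Complex.sin_mul_I]
    push_cast
    ring
  have hsh : Real.sinh (π * t) ≠ 0 := by
    simp [Real.sinh_eq_zero, Real.pi_ne_zero, ht]
  have : (‖Complex.Gamma (1 - Complex.I * t)‖ ^ 2 : ℂ) = ((π * t / Real.sinh (π * t) : ℝ) : ℂ) := by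
    have hsc : ((Real.sinh (π * t) : ℝ) : ℂ) ≠ 0 := by exact_mod_cast hsh
    have hIs : ((Real.sinh (π * t) : ℝ) : ℂ) * Complex.I ≠ 0 :=
      mul_ne_zero hsc Complex.I_ne_zero
    rw [h0, h1, mul_comm (Complex.I * (t:ℂ)) (Complex.Gamma (Complex.I * t)), ← mul_assoc,
      h2, hsin, div_mul_eq_mul_div, div_eq_iff hIs, Complex.ofReal_div,
      div_mul_eq_mul_div, eq_div_iff hsc]
    push_cast
    ring
  exact_mod_cast this

lemma F2 (t : ℝ) :
    ‖Complex.Gamma (1/2 - Complex.I * t)‖ ^ 2 = Real.pi / Real.cosh (Real.pi * t) := by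
  have hconj : (starRingEnd ℂ) (1/2 - Complex.I * t) = 1 - (1/2 - Complex.I * t) := by
    simp [map_sub, map_mul, map_ofNat, Complex.conj_I, Complex.conj_ofReal]; ring
  have h0 : (‖Complex.Gamma (1/2 - Complex.I * t)‖ ^ 2 : ℂ)
      = Complex.Gamma (1/2 - Complex.I * t) * Complex.Gamma (1 - (1/2 - Complex.I * t)) := by
    rw [norm_sq_cast, ← Complex.Gamma_conj, hconj]
  have hcos : Complex.sin ((π:ℂ) * (1/2 - Complex.I * t)) = (Real.cosh (π * t) : ℝ) := by
    have : (π:ℂ) * (1/2 - Complex.I * t) = π/2 - (π * t : ℝ) * Complex.I := by push_cast; ring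
    rw [this, Complex.sin_pi_div_two_sub, Complex.cos_mul_I]
    push_cast
    ring
  have : (‖Complex.Gamma (1/2 - Complex.I * t)‖ ^ 2 : ℂ) = ((π / Real.cosh (π * t) : ℝ) : ℂ) := by
    rw [h0, Complex.Gamma_mul_Gamma_one_sub, hcos]
    push_cast
    ring
  exact_mod_cast this


-- coth → 1
lemma coth_tendsto : Tendsto (fun x : ℝ => Real.cosh x / Real.sinh x) atTop (𝓝 1) := by
  have h1 : Tendsto (fun x : ℝ => 1 + Real.exp (-x) / Real.sinh x) atTop (𝓝 1) := by
    have h2 : Tendsto (fun x : ℝ => Real.exp (-x) / Real.sinh x) atTop (𝓝 0) := by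
      have hsinh : Tendsto Real.sinh atTop atTop := by
        apply tendsto_atTop_mono' atTop ?_ tendsto_id
        filter_upwards [eventually_ge_atTop 0] with x hx
        exact Real.self_le_sinh_iff.mpr hx
      exact Tendsto.div_atTop Real.tendsto_exp_neg_atTop_nhds_zero hsinh
    simpa using tendsto_const_nhds.add h2
  apply h1.congr'
  filter_upwards [eventually_gt_atTop 0] with x hx
  have hs : Real.sinh x ≠ 0 := by positivity
  field_simp
  rw [add_comm, ← Real.cosh_sub_sinh]
  ring

-- ‖c - I y‖ / y → 1
lemma step_norm (c : ℝ) : Tendsto (fun y : ℝ => ‖(c : ℂ) - Complex.I * y‖ / y) atTop (𝓝 1) := by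
  have key : ∀ᶠ y : ℝ in atTop, ‖(c : ℂ) - Complex.I * y‖ / y = Real.sqrt ((c/y)^2 + 1) := by
    filter_upwards [eventually_gt_atTop 0] with y hy
    have h1 : ‖(c : ℂ) - Complex.I * y‖ = Real.sqrt (c^2 + y^2) := by
      rw [Complex.norm_def, Complex.normSq_apply]
      norm_num [Complex.sub_im, Complex.sub_re, Complex.mul_im, Complex.mul_re]
      ring_nf
    rw [h1, show c^2 + y^2 = ((c/y)^2+1) * y^2 by field_simp, Real.sqrt_mul (by positivity),
      Real.sqrt_sq hy.le, mul_div_assoc, div_self hy.ne', mul_one]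
  rw [tendsto_congr' key]
  have : Tendsto (fun y : ℝ => (c/y)^2 + 1) atTop (𝓝 1) := by
    have := (tendsto_const_nhds (x := c)).div_atTop tendsto_id
    simpa using (this.pow 2).add (tendsto_const_nhds (x := (1:ℝ)))
  simpa [Function.comp_def] using (Real.continuous_sqrt.tendsto 1).comp this


noncomputable def GG (j : ℤ) (y : ℝ) : ℝ := ‖Complex.Gamma (((j : ℂ) - Complex.I * y) / 2)‖

lemma half_arg_ne {y : ℝ} (hy : y ≠ 0) (c : ℂ) (hc : c.im = 0) (m : ℕ) :
    (c - Complex.I * y) / 2 ≠ -m := by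
  intro h
  have := congrArg Complex.im h
  simp [Complex.div_im, Complex.sub_im, Complex.mul_im, hc] at this
  exact hy this

lemma GG_ne_zero (j : ℤ) {y : ℝ} (hy : y ≠ 0) : GG j y ≠ 0 := by
  refine norm_ne_zero_iff.mpr (Complex.Gamma_ne_zero fun m => ?_)
  exact half_arg_ne hy _ (by simp) m

lemma half_arg_ne_zero {y : ℝ} (hy : y ≠ 0) (c : ℂ) (hc : c.im = 0) :
    (c - Complex.I * y) / 2 ≠ 0 := by
  simpa using half_arg_ne hy c hc 0





lemma base21 : Tendsto (fun y : ℝ => GG 2 y / (GG 1 y * (y/2) ^ ((1:ℝ)/2))) atTop (𝓝 1) := by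
  set f : ℝ → ℝ := fun y => GG 2 y / (GG 1 y * (y/2) ^ ((1:ℝ)/2)) with hf
  have hsq : ∀ᶠ y in atTop, Real.cosh (π * (y/2)) / Real.sinh (π * (y/2)) = f y ^ 2 := by
    filter_upwards [eventually_gt_atTop 0] with y hy
    have ht : (0:ℝ) < y/2 := by linarith
    have e2 : (((2:ℤ) : ℂ) - Complex.I * y)/2 = 1 - Complex.I * ((y/2 : ℝ):ℂ) := by
      push_cast; ring
    have e1 : (((1:ℤ) : ℂ) - Complex.I * y)/2 = 1/2 - Complex.I * ((y/2 : ℝ):ℂ) := by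
      push_cast; ring
    have hrp : ((y/2) ^ ((1:ℝ)/2)) ^ 2 = y/2 := by
      rw [← Real.rpow_natCast ((y/2)^((1:ℝ)/2)) 2, ← Real.rpow_mul ht.le]
      norm_num
    have hchz : Real.cosh (π * (y/2)) ≠ 0 := (Real.cosh_pos _).ne'
    have hshz : Real.sinh (π * (y/2)) ≠ 0 := by
      have : (0:ℝ) < Real.sinh (π * (y/2)) := Real.sinh_pos_iff.mpr (by positivity)
      exact this.ne'
    have hyz : (y/2 : ℝ) ≠ 0 := ht.ne'
    rw [hf]
    simp only [GG, e2, e1]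
    rw [div_pow, mul_pow, hrp, F1 _ ht.ne', F2]
    field_simp
  have harg : Tendsto (fun y : ℝ => π * (y/2)) atTop atTop := by
    apply Tendsto.const_mul_atTop Real.pi_pos
    exact tendsto_id.atTop_div_const two_pos
  have h2 : Tendsto (fun y => f y ^ 2) atTop (𝓝 1) :=
    ((coth_tendsto.comp harg).congr' hsq)
  have h3 := (Real.continuous_sqrt.tendsto 1).comp h2
  simp only [Real.sqrt_one] at h3
  apply h3.congr'
  filter_upwards [eventually_gt_atTop 0] with y hy
  have : 0 ≤ f y := by
    apply div_nonneg (norm_nonneg _)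
    exact mul_nonneg (norm_nonneg _) (Real.rpow_nonneg (by linarith) _)
  simp [Function.comp, Real.sqrt_sq this]

def Sp (a b : ℤ) : Prop :=
  Tendsto (fun y : ℝ => GG a y / (GG b y * (y/2) ^ (((a - b : ℤ) : ℝ)/2))) atTop (𝓝 1)

lemma Sp_refl (a : ℤ) : Sp a a := by
  apply tendsto_const_nhds.congr'
  filter_upwards [eventually_gt_atTop 0] with y hy
  rw [sub_self]
  push_cast
  rw [zero_div, Real.rpow_zero, mul_one, div_self (GG_ne_zero a hy.ne')]

lemma GG_step (a : ℤ) {y : ℝ} (hy : y ≠ 0) :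
    GG (a + 2) y = ‖((a : ℂ) - Complex.I * y)/2‖ * GG a y := by
  have harg : (((a + 2 : ℤ) : ℂ) - Complex.I * y)/2 = ((a : ℂ) - Complex.I * y)/2 + 1 := by
    push_cast; ring
  rw [GG, GG, harg, Complex.Gamma_add_one _ (half_arg_ne_zero hy _ (by simp)), norm_mul]

lemma stepT (a : ℤ) :
    Tendsto (fun y : ℝ => ‖((a : ℂ) - Complex.I * y)/2‖ / (y/2)) atTop (𝓝 1) := by
  apply (step_norm a).congr'
  filter_upwards [eventually_gt_atTop 0] with y hy
  rw [norm_div]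
  norm_num
  rw [div_div, show (2:ℝ)*(y/2) = y by ring]

lemma ratio_step (a b : ℤ) {y : ℝ} (hy : 0 < y) :
    GG (a + 2) y / (GG b y * (y/2) ^ (((a + 2 - b : ℤ) : ℝ)/2))
      = (GG a y / (GG b y * (y/2) ^ (((a - b : ℤ) : ℝ)/2)))
        * (‖((a : ℂ) - Complex.I * y)/2‖ / (y/2)) := by
  have hp : (0:ℝ) < y/2 := by linarith
  have hexp : (y/2) ^ (((a + 2 - b : ℤ) : ℝ)/2)
      = (y/2) ^ (((a - b : ℤ) : ℝ)/2) * (y/2) := by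
    have h : ((a + 2 - b : ℤ) : ℝ)/2 = ((a - b : ℤ) : ℝ)/2 + 1 := by push_cast; ring
    rw [h, Real.rpow_add hp, Real.rpow_one]
  rw [GG_step a hy.ne', hexp, div_mul_div_comm]
  ring

lemma Sp_up {a b : ℤ} (h : Sp a b) : Sp (a + 2) b := by
  have := h.mul (stepT a)
  rw [mul_one] at this
  apply this.congr'
  filter_upwards [eventually_gt_atTop 0] with y hy
  rw [ratio_step a b hy]

lemma Sp_down {a b : ℤ} (h : Sp (a + 2) b) : Sp a b := by
  have := h.div (stepT a) one_ne_zero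
  rw [div_one] at this
  apply this.congr'
  filter_upwards [eventually_gt_atTop 0] with y hy
  have hp : (0:ℝ) < y/2 := by linarith
  have hns : ‖((a : ℂ) - Complex.I * y)/2‖ / (y/2) ≠ 0 := by
    refine div_ne_zero (norm_ne_zero_iff.mpr ?_) hp.ne'
    exact half_arg_ne_zero hy.ne' _ (by simp)
  simp only [Pi.div_apply]
  rw [ratio_step a b hy, mul_div_assoc, div_self hns, mul_one]

lemma Sp_two_one : Sp 2 1 := by
  have h : (((2 - 1 : ℤ) : ℝ))/2 = (1:ℝ)/2 := by norm_num
  unfold Sp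
  rw [h]
  exact base21

lemma Sp_one (a : ℤ) : Sp a 1 := by
  have key : ∀ m : ℤ, Sp (1 + 2*m) 1 ∧ Sp (2 + 2*m) 1 := by
    intro m
    induction m using Int.induction_on with
    | zero => exact ⟨by simpa using Sp_refl 1, by simpa using Sp_two_one⟩
    | succ k ih =>
        constructor
        · rw [show (1 + 2*((k:ℤ)+1) : ℤ) = (1 + 2*k) + 2 by ring]
          exact Sp_up ih.1
        · rw [show (2 + 2*((k:ℤ)+1) : ℤ) = (2 + 2*k) + 2 by ring]
          exact Sp_up ih.2
    | pred k ih =>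
        constructor
        · apply Sp_down
          rw [show (1 + 2*(-(k:ℤ)-1) + 2 : ℤ) = 1 + 2*(-(k:ℤ)) by ring]
          exact ih.1
        · apply Sp_down
          rw [show (2 + 2*(-(k:ℤ)-1) + 2 : ℤ) = 2 + 2*(-(k:ℤ)) by ring]
          exact ih.2
  rcases Int.even_or_odd a with ⟨m, hm⟩ | ⟨m, hm⟩
  · rw [show a = 2 + 2*(m-1) by omega]
    exact (key (m-1)).2
  · rw [show a = 1 + 2*m by omega]
    exact (key m).1

lemma Sp_all (a b : ℤ) : Tendsto
    (fun y : ℝ => GG a y / (GG b y * (y/2) ^ (((a - b : ℤ) : ℝ)/2))) atTop (𝓝 1) := by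
  have := (Sp_one a).div (Sp_one b) one_ne_zero
  rw [div_one] at this
  apply this.congr'
  filter_upwards [eventually_gt_atTop 0] with y hy
  have hp : (0:ℝ) < y/2 := by linarith
  have h1 : GG 1 y ≠ 0 := GG_ne_zero 1 hy.ne'
  have hb : GG b y ≠ 0 := GG_ne_zero b hy.ne'
  have hpab : (y/2) ^ (((a - 1 : ℤ) : ℝ)/2)
      = (y/2) ^ (((a - b : ℤ) : ℝ)/2) * (y/2) ^ (((b - 1 : ℤ) : ℝ)/2) := by
    rw [← Real.rpow_add hp]
    congr 1
    push_cast
    ring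
  have hpe : ∀ e : ℝ, (y/2) ^ e ≠ 0 := fun e => (Real.rpow_pos_of_pos hp e).ne'
  simp only [Pi.div_apply]
  rw [hpab]
  field_simp

lemma full_arg_ne {y : ℝ} (hy : y ≠ 0) (c : ℂ) (hc : c.im = 0) (m : ℕ) :
    c - Complex.I * y ≠ -m := by
  intro h
  have := congrArg Complex.im h
  simp [Complex.sub_im, Complex.mul_im, hc] at this
  exact hy this

lemma shift3 (α : ℕ) : Tendsto (fun y : ℝ =>
    ‖Complex.Gamma (1 - Complex.I * y)‖
      / (‖Complex.Gamma (1 - Complex.I * y - α)‖ * y ^ α)) atTop (𝓝 1) := by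
  induction α with
  | zero =>
      apply tendsto_const_nhds.congr'
      filter_upwards [eventually_gt_atTop 0] with y hy
      have hne : Complex.Gamma (1 - Complex.I * y) ≠ 0 := by
        apply Complex.Gamma_ne_zero
        intro m
        have := full_arg_ne hy.ne' 1 (by simp) m
        simpa using this
      have h0 : ((0:ℕ):ℂ) = 0 := by norm_num
      rw [h0, sub_zero, pow_zero, mul_one, div_self (norm_ne_zero_iff.mpr hne)]
  | succ k ih =>
      have hstep : Tendsto (fun y : ℝ => ‖((-(k:ℝ) : ℝ) : ℂ) - Complex.I * y‖ / y) atTop (𝓝 1) :=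
        step_norm _
      have := ih.mul hstep
      rw [mul_one] at this
      apply this.congr'
      filter_upwards [eventually_gt_atTop 0] with y hy
      have harg : (1 : ℂ) - Complex.I * y - (k : ℂ) = (1 - Complex.I * y - ((k:ℕ)+1 : ℕ)) + 1 := by
        push_cast; ring
      have hz : ((-(k:ℝ) : ℝ) : ℂ) - Complex.I * y ≠ 0 := by
        intro h
        have := congrArg Complex.im h
        simp [Complex.sub_im, Complex.mul_im] at this
        exact hy.ne' this
      have hz' : (1 : ℂ) - Complex.I * y - ((k:ℕ)+1 : ℕ) ≠ 0 := by
        intro h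
        apply hz
        rw [← h]
        push_cast; ring
      have hG : Complex.Gamma (1 - Complex.I * y - (k : ℂ))
          = (((-(k:ℝ) : ℝ) : ℂ) - Complex.I * y) * Complex.Gamma (1 - Complex.I * y - ((k:ℕ)+1 : ℕ)) := by
        rw [harg, Complex.Gamma_add_one _ hz']
        congr 1
        push_cast; ring
      have hnz : ‖((-(k:ℝ) : ℝ) : ℂ) - Complex.I * y‖ ≠ 0 := norm_ne_zero_iff.mpr hz
      have hcast : (1 : ℂ) - Complex.I * y - ((k:ℕ) : ℂ) = 1 - Complex.I * y - (k : ℂ) := by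
        push_cast; ring
      have hG' : Complex.Gamma (1 - Complex.I * (y:ℂ) - ((k:ℕ)+1 : ℕ)) ≠ 0 := by
        apply Complex.Gamma_ne_zero
        intro m
        have := full_arg_ne hy.ne' (1 - (((k:ℕ)+1 : ℕ) : ℂ)) (by simp) m
        intro h
        apply this
        rw [← h]
        ring
      have hd1 : ‖((-(k:ℝ) : ℝ) : ℂ) - Complex.I * y‖ * ‖Complex.Gamma (1 - Complex.I * (y:ℂ) - ((k:ℕ)+1 : ℕ))‖ * y ^ k * y ≠ 0 :=
        mul_ne_zero (mul_ne_zero (mul_ne_zero hnz (norm_ne_zero_iff.mpr hG'))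
          (pow_ne_zero _ hy.ne')) hy.ne'
      have hd2 : ‖Complex.Gamma (1 - Complex.I * (y:ℂ) - ((k:ℕ)+1 : ℕ))‖ * (y ^ k * y) ≠ 0 :=
        mul_ne_zero (norm_ne_zero_iff.mpr hG') (mul_ne_zero (pow_ne_zero _ hy.ne') hy.ne')
      rw [hcast, hG, norm_mul, pow_succ, div_mul_div_comm, div_eq_div_iff hd1 hd2]
      ring

lemma main_top (n ℓ α : ℕ) : Tendsto (fun y : ℝ =>
        ‖Complex.Gamma (((n : ℂ) + ℓ - Complex.I * y) / 2) *
            Complex.Gamma ((2 - ℓ - Complex.I * y) / 2) *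
            Complex.Gamma (1 - Complex.I * y) /
          (2 * ((Real.pi ^ (((n : ℝ) - 1) / 2) : ℝ) : ℂ) *
            Complex.Gamma ((2 - Complex.I * y) / 2) *
            Complex.Gamma ((1 - Complex.I * y) / 2) *
            Complex.Gamma (1 - Complex.I * y - α))‖ /
        (1 / 2 * |y| ^ α * (|y| / (2 * Real.pi)) ^ (((n : ℝ) - 1) / 2)))
      atTop (𝓝 1) := by
  have h1 := Sp_all ((n:ℤ) + ℓ) 2
  have h2 := Sp_all (2 - (ℓ:ℤ)) 1
  have h3 := shift3 α
  have H := (h1.mul h2).mul h3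
  rw [mul_one, mul_one] at H
  apply H.congr'
  filter_upwards [eventually_gt_atTop 0] with y hy
  have hπ : (0:ℝ) < Real.pi := Real.pi_pos
  set c : ℝ := ((n : ℝ) - 1) / 2 with hc
  -- power bookkeeping
  have hpow : Real.pi ^ c * (y / (2 * Real.pi)) ^ c
      = (y/2) ^ ((((n:ℤ) + ℓ - 2 : ℤ) : ℝ)/2) * (y/2) ^ (((2 - (ℓ:ℤ) - 1 : ℤ) : ℝ)/2) := by
    rw [← Real.mul_rpow hπ.le (by positivity), ← Real.rpow_add (by linarith : (0:ℝ) < y/2)]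
    rw [show Real.pi * (y / (2 * Real.pi)) = y/2 by field_simp]
    congr 1
    push_cast
    ring
  simp only [GG]
  rw [abs_of_pos hy]
  simp only [norm_div, norm_mul, Complex.norm_real]
  rw [show ‖(2:ℂ)‖ = 2 from by norm_num]
  rw [Real.norm_eq_abs, abs_of_pos (Real.rpow_pos_of_pos hπ c)]
  rw [show ((n:ℂ) + ℓ - Complex.I * y)/2 = ((((n:ℤ) + ℓ : ℤ) : ℂ) - Complex.I * y)/2 by
    push_cast; ring]
  rw [show ((2:ℂ) - ℓ - Complex.I * y)/2 = (((2 - (ℓ:ℤ) : ℤ) : ℂ) - Complex.I * y)/2 by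
    push_cast; ring]
  rw [show ((2:ℂ) - Complex.I * y)/2 = (((2:ℤ) : ℂ) - Complex.I * y)/2 by push_cast; ring]
  rw [show ((1:ℂ) - Complex.I * y)/2 = (((1:ℤ) : ℂ) - Complex.I * y)/2 by push_cast; ring]
  rw [div_div, div_mul_div_comm, div_mul_div_comm]
  congr 1
  linear_combination (-1 * ‖Complex.Gamma ((((2:ℤ) : ℂ) - Complex.I * y)/2)‖ *
    ‖Complex.Gamma ((((1:ℤ) : ℂ) - Complex.I * y)/2)‖ *
    ‖Complex.Gamma (1 - Complex.I * y - (α:ℂ))‖ * y ^ α) * hpow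


lemma even_fun (n ℓ α : ℕ) (y : ℝ) :
    (fun y : ℝ =>
        ‖Complex.Gamma (((n : ℂ) + ℓ - Complex.I * y) / 2) *
            Complex.Gamma ((2 - ℓ - Complex.I * y) / 2) *
            Complex.Gamma (1 - Complex.I * y) /
          (2 * ((Real.pi ^ (((n : ℝ) - 1) / 2) : ℝ) : ℂ) *
            Complex.Gamma ((2 - Complex.I * y) / 2) *
            Complex.Gamma ((1 - Complex.I * y) / 2) *
            Complex.Gamma (1 - Complex.I * y - α))‖ /
        (1 / 2 * |y| ^ α * (|y| / (2 * Real.pi)) ^ (((n : ℝ) - 1) / 2))) (-y)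
    = (fun y : ℝ =>
        ‖Complex.Gamma (((n : ℂ) + ℓ - Complex.I * y) / 2) *
            Complex.Gamma ((2 - ℓ - Complex.I * y) / 2) *
            Complex.Gamma (1 - Complex.I * y) /
          (2 * ((Real.pi ^ (((n : ℝ) - 1) / 2) : ℝ) : ℂ) *
            Complex.Gamma ((2 - Complex.I * y) / 2) *
            Complex.Gamma ((1 - Complex.I * y) / 2) *
            Complex.Gamma (1 - Complex.I * y - α))‖ /
        (1 / 2 * |y| ^ α * (|y| / (2 * Real.pi)) ^ (((n : ℝ) - 1) / 2))) y := by
  simp only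
  have hE : Complex.Gamma (((n : ℂ) + ℓ - Complex.I * (-y : ℝ)) / 2) *
            Complex.Gamma ((2 - ℓ - Complex.I * (-y : ℝ)) / 2) *
            Complex.Gamma (1 - Complex.I * (-y : ℝ)) /
          (2 * ((Real.pi ^ (((n : ℝ) - 1) / 2) : ℝ) : ℂ) *
            Complex.Gamma ((2 - Complex.I * (-y : ℝ)) / 2) *
            Complex.Gamma ((1 - Complex.I * (-y : ℝ)) / 2) *
            Complex.Gamma (1 - Complex.I * (-y : ℝ) - α))
      = (starRingEnd ℂ) (Complex.Gamma (((n : ℂ) + ℓ - Complex.I * y) / 2) *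
            Complex.Gamma ((2 - ℓ - Complex.I * y) / 2) *
            Complex.Gamma (1 - Complex.I * y) /
          (2 * ((Real.pi ^ (((n : ℝ) - 1) / 2) : ℝ) : ℂ) *
            Complex.Gamma ((2 - Complex.I * y) / 2) *
            Complex.Gamma ((1 - Complex.I * y) / 2) *
            Complex.Gamma (1 - Complex.I * y - α))) := by
    rw [map_div₀, map_mul, map_mul, map_mul, map_mul, map_mul,
      ← Complex.Gamma_conj, ← Complex.Gamma_conj, ← Complex.Gamma_conj,
      ← Complex.Gamma_conj, ← Complex.Gamma_conj, ← Complex.Gamma_conj]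
    simp only [map_div₀, map_sub, map_add, map_mul, map_one, map_ofNat,
      Complex.conj_I, Complex.conj_ofReal, Complex.conj_natCast, Complex.ofReal_neg]
    ring_nf
  rw [hE]
  simp [abs_neg]

/-- Asymptotics of the Mellin multiplier `N_ℓ^α`:
`|N(y)| ∼ (1/2)|y|^α (|y|/(2π))^{(n−1)/2}` as `y → ±∞`. -/
theorem mellin_multiplier_asymptotics (n ℓ α : ℕ) (hn : 2 ≤ n) :
    Tendsto (fun y : ℝ =>
        ‖Complex.Gamma (((n : ℂ) + ℓ - Complex.I * y) / 2) *
            Complex.Gamma ((2 - ℓ - Complex.I * y) / 2) *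
            Complex.Gamma (1 - Complex.I * y) /
          (2 * ((Real.pi ^ (((n : ℝ) - 1) / 2) : ℝ) : ℂ) *
            Complex.Gamma ((2 - Complex.I * y) / 2) *
            Complex.Gamma ((1 - Complex.I * y) / 2) *
            Complex.Gamma (1 - Complex.I * y - α))‖ /
        (1 / 2 * |y| ^ α * (|y| / (2 * Real.pi)) ^ (((n : ℝ) - 1) / 2)))
      atTop (𝓝 1) ∧
    Tendsto (fun y : ℝ =>
        ‖Complex.Gamma (((n : ℂ) + ℓ - Complex.I * y) / 2) *
            Complex.Gamma ((2 - ℓ - Complex.I * y) / 2) *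
            Complex.Gamma (1 - Complex.I * y) /
          (2 * ((Real.pi ^ (((n : ℝ) - 1) / 2) : ℝ) : ℂ) *
            Complex.Gamma ((2 - Complex.I * y) / 2) *
            Complex.Gamma ((1 - Complex.I * y) / 2) *
            Complex.Gamma (1 - Complex.I * y - α))‖ /
        (1 / 2 * |y| ^ α * (|y| / (2 * Real.pi)) ^ (((n : ℝ) - 1) / 2)))
      atBot (𝓝 1) := by
  constructor
  · exact main_top n ℓ α
  · exact ((main_top n ℓ α).comp tendsto_neg_atBot_atTop).congr (even_fun n ℓ α)
end

section
/- Let α ≥ 1 be an integer and let ψ : ℝ → ℂ be infinitely differentiable. For every t > 0, t^α · D^{(α−1)}[s ↦ ψ(s)/s](t) = ∑_{m=1}^{α} s(α,m) · ((tD)^{m−1} ψ)(t), where D^{(α−1)} denotes the (α−1)-fold iterated derivative, (tD)ψ is the function s ↦ s·ψ′(s), (tD)^{m−1} its (m−1)-fold iterate, and s(α,m) are the signed Stirling numbers of the first kind. -/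
open scoped ContDiff
open Finset Polynomial

noncomputable def TD : (ℝ → ℂ) → (ℝ → ℂ) := fun g s => s * deriv g s

lemma TD_contDiff {g : ℝ → ℂ} (hg : ContDiff ℝ ∞ g) : ContDiff ℝ ∞ (TD g) := by
  have hd : ContDiff ℝ ∞ (deriv g) := (contDiff_infty_iff_deriv.mp hg).2
  exact (Complex.ofRealCLM.contDiff.of_le le_top).mul hd

lemma TD_iter_contDiff {g : ℝ → ℂ} (hg : ContDiff ℝ ∞ g) (m : ℕ) :
    ContDiff ℝ ∞ (TD^[m] g) := by
  induction m with
  | zero => simpa using hg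
  | succ k ih => rw [Function.iterate_succ_apply']; exact TD_contDiff ih

lemma stirling_rec (n j : ℕ) :
    (descPochhammer ℤ (n + 2)).coeff (j + 1)
      = (descPochhammer ℤ (n + 1)).coeff j
        - (n + 1) * (descPochhammer ℤ (n + 1)).coeff (j + 1) := by
  rw [descPochhammer_succ_right, mul_sub, Polynomial.coeff_sub, Polynomial.coeff_mul_X]
  congr 1
  rw [show ((n+1 : ℕ) : Polynomial ℤ) = Polynomial.C ((n:ℤ)+1) by push_cast; simp,
    Polynomial.coeff_mul_C]
  ring

lemma stirling_coeff_zero (n : ℕ) : (descPochhammer ℤ (n + 1)).coeff 0 = 0 := by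
  rw [Polynomial.coeff_zero_eq_eval_zero]
  exact descPochhammer_ne_zero_eval_zero (R := ℤ) (Nat.succ_ne_zero n)

lemma stirling_coeff_top (n : ℕ) : (descPochhammer ℤ (n + 1)).coeff (n + 2) = 0 := by
  apply Polynomial.coeff_eq_zero_of_natDegree_lt
  rw [descPochhammer_natDegree]
  omega

lemma contDiffOn_iteratedDeriv_open {f : ℝ → ℂ} {s : Set ℝ} (hs : IsOpen s)
    (hf : ContDiffOn ℝ ∞ f s) (n : ℕ) : ContDiffOn ℝ ∞ (iteratedDeriv n f) s := by
  induction n with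
  | zero => simpa using hf
  | succ k ih =>
      rw [iteratedDeriv_succ]
      exact ih.deriv_of_isOpen hs le_rfl

lemma diffAt_iteratedDeriv {f : ℝ → ℂ} {s : Set ℝ} (hs : IsOpen s)
    (hf : ContDiffOn ℝ ∞ f s) (n : ℕ) {t : ℝ} (ht : t ∈ s) :
    DifferentiableAt ℝ (iteratedDeriv n f) t := by
  have := (contDiffOn_iteratedDeriv_open hs hf n).contDiffAt (hs.mem_nhds ht)
  exact this.differentiableAt (by simp)

lemma key (ψ : ℝ → ℂ) (hψ : ContDiff ℝ ∞ ψ) (n : ℕ) :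
    ∀ t : ℝ, 0 < t →
      (t : ℂ) ^ (n + 1) * iteratedDeriv n (fun s : ℝ => ψ s / s) t
        = ∑ j ∈ Finset.range (n + 1),
            (((descPochhammer ℤ (n + 1)).coeff (j + 1) : ℤ) : ℂ) * (TD^[j] ψ) t := by
  have hF : ContDiffOn ℝ ∞ (fun s : ℝ => ψ s / s) (Set.Ioi (0:ℝ)) := by
    have hc : ContDiff ℝ ∞ (fun s : ℝ => (s : ℂ)) := Complex.ofRealCLM.contDiff.of_le le_top
    have h := hψ.contDiffOn.mul (hc.contDiffOn.inv
      (fun x hx => by exact_mod_cast ne_of_gt (Set.mem_Ioi.mp hx)))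
    simpa [div_eq_mul_inv] using h
  induction n with
  | zero =>
      intro t ht
      have htc : (t : ℂ) ≠ 0 := by exact_mod_cast ne_of_gt ht
      simp [iteratedDeriv_zero, descPochhammer_one, mul_div_cancel₀ _ htc,
        mul_div_assoc, htc]
  | succ n ih =>
      intro t ht
      set F := fun s : ℝ => ψ s / s with hFdef
      -- derivative of the LHS function
      have hdF : DifferentiableAt ℝ (iteratedDeriv n F) t :=
        diffAt_iteratedDeriv isOpen_Ioi hF n ht
      have hpow : HasDerivAt (fun s : ℝ => (s : ℂ) ^ (n + 1))
          (((n : ℂ) + 1) * (t : ℂ) ^ n) t := by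
        have := (hasDerivAt_pow (n + 1) ((t : ℂ))).comp_ofReal
        simpa [Nat.cast_add] using this
      have h1 : HasDerivAt (fun s : ℝ => (s : ℂ) ^ (n + 1) * iteratedDeriv n F s)
          (((n : ℂ) + 1) * (t : ℂ) ^ n * iteratedDeriv n F t
            + (t : ℂ) ^ (n + 1) * iteratedDeriv (n + 1) F t) t := by
        have := hpow.mul hdF.hasDerivAt
        rwa [← iteratedDeriv_succ] at this
      -- eventual equality with the RHS function
      have hEv : (fun s : ℝ => (s : ℂ) ^ (n + 1) * iteratedDeriv n F s)
          =ᶠ[nhds t] (fun s : ℝ => ∑ j ∈ Finset.range (n + 1),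
            (((descPochhammer ℤ (n + 1)).coeff (j + 1) : ℤ) : ℂ) * (TD^[j] ψ) s) := by
        filter_upwards [isOpen_Ioi.mem_nhds ht] with s hs
        exact ih s hs
      -- derivative of the RHS function
      have hTD : ∀ j, DifferentiableAt ℝ (TD^[j] ψ) t := fun j =>
        ((TD_iter_contDiff hψ j).differentiable (by simp)).differentiableAt
      have h2 : HasDerivAt (fun s : ℝ => ∑ j ∈ Finset.range (n + 1),
            (((descPochhammer ℤ (n + 1)).coeff (j + 1) : ℤ) : ℂ) * (TD^[j] ψ) s)
          (∑ j ∈ Finset.range (n + 1),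
            (((descPochhammer ℤ (n + 1)).coeff (j + 1) : ℤ) : ℂ) * deriv (TD^[j] ψ) t) t :=
        HasDerivAt.fun_sum fun j _ => ((hTD j).hasDerivAt).const_mul _
      have hderiv_eq : ((n : ℂ) + 1) * (t : ℂ) ^ n * iteratedDeriv n F t
            + (t : ℂ) ^ (n + 1) * iteratedDeriv (n + 1) F t
          = ∑ j ∈ Finset.range (n + 1),
            (((descPochhammer ℤ (n + 1)).coeff (j + 1) : ℤ) : ℂ) * deriv (TD^[j] ψ) t := by
        rw [← h1.deriv, ← h2.deriv]
        exact hEv.deriv_eq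
      -- multiply by t and rearrange
      have hmul : (t : ℂ) ^ (n + 2) * iteratedDeriv (n + 1) F t
          = ∑ j ∈ Finset.range (n + 1),
              (((descPochhammer ℤ (n + 1)).coeff (j + 1) : ℤ) : ℂ) * (TD^[j + 1] ψ) t
            - ((n : ℂ) + 1) * ∑ j ∈ Finset.range (n + 1),
              (((descPochhammer ℤ (n + 1)).coeff (j + 1) : ℤ) : ℂ) * (TD^[j] ψ) t := by
        have hIH := ih t ht
        have hTDs : ∀ j, (TD^[j + 1] ψ) t = (t : ℂ) * deriv (TD^[j] ψ) t := fun j => by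
          rw [Function.iterate_succ_apply']; rfl
        calc (t : ℂ) ^ (n + 2) * iteratedDeriv (n + 1) F t
            = (t : ℂ) * (((n : ℂ) + 1) * (t : ℂ) ^ n * iteratedDeriv n F t
                + (t : ℂ) ^ (n + 1) * iteratedDeriv (n + 1) F t)
              - ((n : ℂ) + 1) * ((t : ℂ) ^ (n + 1) * iteratedDeriv n F t) := by ring
          _ = _ := by
              rw [hderiv_eq, hIH, Finset.mul_sum]
              congr 1
              exact Finset.sum_congr rfl fun j _ => by rw [hTDs j]; ring
      -- now the combinatorial identity
      have hsplit : ∀ j : ℕ, (((descPochhammer ℤ (n + 2)).coeff (j + 1) : ℤ) : ℂ)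
          = (((descPochhammer ℤ (n + 1)).coeff j : ℤ) : ℂ)
            - ((n : ℂ) + 1) * (((descPochhammer ℤ (n + 1)).coeff (j + 1) : ℤ) : ℂ) := by
        intro j; rw [stirling_rec n j]; push_cast; ring
      have hRHS : ∑ j ∈ Finset.range (n + 2),
            (((descPochhammer ℤ (n + 2)).coeff (j + 1) : ℤ) : ℂ) * (TD^[j] ψ) t
          = (∑ j ∈ Finset.range (n + 1),
              (((descPochhammer ℤ (n + 1)).coeff (j + 1) : ℤ) : ℂ) * (TD^[j + 1] ψ) t)
            - ((n : ℂ) + 1) * ∑ j ∈ Finset.range (n + 1),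
              (((descPochhammer ℤ (n + 1)).coeff (j + 1) : ℤ) : ℂ) * (TD^[j] ψ) t := by
        rw [Finset.sum_congr rfl (fun j _ => by rw [hsplit j, sub_mul] :
          ∀ j ∈ Finset.range (n + 2),
            (((descPochhammer ℤ (n + 2)).coeff (j + 1) : ℤ) : ℂ) * (TD^[j] ψ) t
              = (((descPochhammer ℤ (n + 1)).coeff j : ℤ) : ℂ) * (TD^[j] ψ) t
                - ((n : ℂ) + 1) * (((descPochhammer ℤ (n + 1)).coeff (j + 1) : ℤ) : ℂ)
                  * (TD^[j] ψ) t),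
          Finset.sum_sub_distrib]
        congr 1
        · rw [Finset.sum_range_succ' _ (n + 1)]
          simp [stirling_coeff_zero n]
        · rw [Finset.sum_range_succ, stirling_coeff_top n, Finset.mul_sum]
          simp [mul_assoc]
      rw [hmul, hRHS]

/-- For smooth `ψ` and `t > 0`:
`t^α ∂^{α−1}(ψ(s)/s)(t) = ∑_{m=1}^{α} s(α,m) ((t∂)^{m−1}ψ)(t)`,
where `s(α,m)` are the signed Stirling numbers of the first kind
(coefficients of the falling factorial `descPochhammer ℤ α`). -/
theorem stirling_tpow_iteratedDeriv_div (α : ℕ) (hα : 1 ≤ α) (ψ : ℝ → ℂ)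
    (hψ : ContDiff ℝ (⊤ : ℕ∞) ψ) (t : ℝ) (ht : 0 < t) :
    (t : ℂ) ^ α * iteratedDeriv (α - 1) (fun s : ℝ => ψ s / s) t
      = ∑ m ∈ Finset.Icc 1 α,
          (((descPochhammer ℤ α).coeff m : ℤ) : ℂ) *
            ((fun (g : ℝ → ℂ) (s : ℝ) => s * deriv g s)^[m - 1] ψ) t := by
  obtain ⟨n, rfl⟩ : ∃ n, α = n + 1 := ⟨α - 1, (Nat.succ_pred_eq_of_pos hα).symm⟩
  have hψ' : ContDiff ℝ ∞ ψ := hψ.of_le (by simp)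
  have h := key ψ hψ' n t ht
  have hTD : (fun (g : ℝ → ℂ) (s : ℝ) => (s : ℂ) * deriv g s) = TD := rfl
  rw [show Finset.Icc 1 (n + 1) = Finset.Ico 1 (n + 2) by rfl, Finset.sum_Ico_eq_sum_range]
  simpa [hTD, add_comm 1] using h
end

section
/- Let α ≥ 1 be an integer and let ψ : ℝ → ℂ be infinitely differentiable. For every t ∈ ℝ, D^{(α−1)}[s ↦ s^α ψ(s)](t) = t · ∑_{m=1}^{α} c(α,m) · ((Dt)^{m−1} ψ)(t), where D^{(α−1)} denotes the (α−1)-fold iterated derivative, (Dt)ψ is the function s ↦ (d/ds)(s·ψ(s)), (Dt)^{m−1} its (m−1)-fold iterate, and c(α,m) are the unsigned Stirling numbers of the first kind. -/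
open Finset

private noncomputable def Dop : (ℝ → ℂ) → (ℝ → ℂ) :=
  fun (g : ℝ → ℂ) (s : ℝ) => deriv (fun y : ℝ => y * g y) s

private lemma ofReal_hasDerivAt (x : ℝ) : HasDerivAt (Complex.ofReal) 1 x := by
  simpa using (hasDerivAt_id x).ofReal_comp

private lemma diff_of {g : ℝ → ℂ} (h : ContDiff ℝ (⊤ : ℕ∞) g) : Differentiable ℝ g :=
  h.differentiable (by simp)

private lemma contDiff_Dop (g : ℝ → ℂ) (hg : ContDiff ℝ (⊤ : ℕ∞) g) :
    ContDiff ℝ (⊤ : ℕ∞) (Dop g) := by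
  have h1 : ContDiff ℝ (⊤ : ℕ∞) (fun y : ℝ => (y : ℂ) * g y) :=
    Complex.ofRealCLM.contDiff.mul hg
  exact (contDiff_infty_iff_deriv.mp h1).2

private lemma contDiff_Dop_iter (g : ℝ → ℂ) (hg : ContDiff ℝ (⊤ : ℕ∞) g) (n : ℕ) :
    ContDiff ℝ (⊤ : ℕ∞) (Dop^[n] g) := by
  induction n with
  | zero => simpa
  | succ n ih => rw [Function.iterate_succ_apply']; exact contDiff_Dop _ ih

private lemma leibniz_t (f : ℝ → ℂ) (hf : ContDiff ℝ (⊤ : ℕ∞) f) (n : ℕ) :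
    iteratedDeriv (n + 1) (fun s : ℝ => (s : ℂ) * f s)
      = fun t : ℝ => (t : ℂ) * iteratedDeriv (n + 1) f t + ((n : ℂ) + 1) * iteratedDeriv n f t := by
  have hFn : ∀ m : ℕ, ContDiff ℝ (⊤ : ℕ∞) (iteratedDeriv m f) := by
    intro m; rw [iteratedDeriv_eq_iterate]; exact hf.iterate_deriv m
  induction n with
  | zero =>
    funext t
    have h := ((ofReal_hasDerivAt t).fun_mul (diff_of hf t).hasDerivAt)
    simp only [iteratedDeriv_succ, iteratedDeriv_zero]
    rw [h.deriv]; push_cast; ring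
  | succ n ih =>
    funext t
    have e1 : deriv (iteratedDeriv (n + 1) f) t = iteratedDeriv (n + 2) f t :=
      (congrFun (iteratedDeriv_succ (n := n + 1) (f := f)) t).symm
    have e0 : deriv (iteratedDeriv n f) t = iteratedDeriv (n + 1) f t :=
      (congrFun (iteratedDeriv_succ (n := n) (f := f)) t).symm
    have hd1 : HasDerivAt (fun t : ℝ => (t : ℂ) * iteratedDeriv (n + 1) f t)
        (1 * iteratedDeriv (n + 1) f t + (t : ℂ) * deriv (iteratedDeriv (n + 1) f) t) t :=
      (ofReal_hasDerivAt t).mul (diff_of (hFn (n + 1)) t).hasDerivAt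
    have hd2 : HasDerivAt (fun t : ℝ => ((n : ℂ) + 1) * iteratedDeriv n f t)
        (((n : ℂ) + 1) * deriv (iteratedDeriv n f) t) t :=
      (diff_of (hFn n) t).hasDerivAt.const_mul ((n : ℂ) + 1)
    rw [iteratedDeriv_succ, ih]
    rw [(hd1.fun_add hd2).deriv, e0, e1]
    push_cast
    ring

private lemma coeff_zero_asc (α : ℕ) (hα : 1 ≤ α) : (ascPochhammer ℕ α).coeff 0 = 0 := by
  rw [Polynomial.coeff_zero_eq_eval_zero, ascPochhammer_eval_zero]
  simp [Nat.one_le_iff_ne_zero.mp hα]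

private lemma coeff_top_asc (α : ℕ) : (ascPochhammer ℕ α).coeff (α + 1) = 0 := by
  apply Polynomial.coeff_eq_zero_of_natDegree_lt
  rw [ascPochhammer_natDegree]
  omega

private lemma aux_main (α : ℕ) (hα : 1 ≤ α) (ψ : ℝ → ℂ) (hψ : ContDiff ℝ (⊤ : ℕ∞) ψ) :
    iteratedDeriv (α - 1) (fun s : ℝ => (s : ℂ) ^ α * ψ s)
      = fun t : ℝ => (t : ℂ) * ∑ m ∈ range (α + 1),
          (((ascPochhammer ℕ α).coeff m : ℕ) : ℂ) * (Dop^[m - 1] ψ) t := by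
  induction α, hα using Nat.le_induction with
  | base =>
    funext t
    simp [Finset.sum_range_succ, coeff_zero_asc 1 le_rfl,
      show (ascPochhammer ℕ 1).coeff 1 = 1 by simp [ascPochhammer_one]]
  | succ α hα ih =>
    funext t
    have hsm : ∀ m : ℕ, ContDiff ℝ (⊤ : ℕ∞) (Dop^[m] ψ) := contDiff_Dop_iter ψ hψ
    set c : ℕ → ℂ := fun m => (((ascPochhammer ℕ α).coeff m : ℕ) : ℂ) with hc
    set f : ℝ → ℂ := fun s : ℝ => (s : ℂ) ^ α * ψ s with hf
    have hfc : ContDiff ℝ (⊤ : ℕ∞) f := (Complex.ofRealCLM.contDiff.pow α).mul hψ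
    have hstep : (fun s : ℝ => (s : ℂ) ^ (α + 1) * ψ s) = fun s : ℝ => (s : ℂ) * f s := by
      funext s; simp only [hf, pow_succ]; ring
    have hα1 : α - 1 + 1 = α := Nat.succ_pred_eq_of_pos hα
    set S : ℝ → ℂ := fun x : ℝ => ∑ m ∈ range (α + 1), c m * (Dop^[m - 1] ψ) x with hS
    have hIH : iteratedDeriv (α - 1) f = fun x : ℝ => (x : ℂ) * S x := ih
    have hdiffm : ∀ (m : ℕ) (x : ℝ),
        HasDerivAt (fun y : ℝ => (y : ℂ) * (Dop^[m] ψ) y)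
          (1 * (Dop^[m] ψ) x + (x : ℂ) * deriv (Dop^[m] ψ) x) x := fun m x =>
      (ofReal_hasDerivAt x).mul (diff_of (hsm m) x).hasDerivAt
    have hDS : ∀ x : ℝ, deriv (fun y : ℝ => (y : ℂ) * S y) x
        = ∑ m ∈ range (α + 1), c m * (Dop^[m - 1 + 1] ψ) x := by
      intro x
      have h1 : (fun y : ℝ => (y : ℂ) * S y)
          = fun y : ℝ => ∑ m ∈ range (α + 1), c m * ((y : ℂ) * (Dop^[m - 1] ψ) y) := by
        funext y; rw [hS, Finset.mul_sum]; exact Finset.sum_congr rfl fun m _ => by ring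
      rw [h1, deriv_fun_sum (fun m _ => ((hdiffm (m - 1) x).differentiableAt).const_mul _)]
      refine Finset.sum_congr rfl fun m _ => ?_
      rw [deriv_const_mul _ (hdiffm (m - 1) x).differentiableAt]
      rw [Function.iterate_succ_apply']
      rfl
    have hDf : iteratedDeriv α f t = ∑ m ∈ range (α + 1), c m * (Dop^[m - 1 + 1] ψ) t := by
      conv_lhs => rw [← hα1, iteratedDeriv_succ, hIH]
      exact hDS t
    have hDf' : iteratedDeriv (α - 1) f t = (t : ℂ) * S t := by rw [hIH]
    have key : iteratedDeriv (α + 1 - 1) (fun s : ℝ => (s : ℂ) ^ (α + 1) * ψ s) t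
        = (t : ℂ) * iteratedDeriv α f t + (((α - 1 : ℕ) : ℂ) + 1) * iteratedDeriv (α - 1) f t := by
      rw [show α + 1 - 1 = (α - 1) + 1 by omega, hstep, leibniz_t f hfc (α - 1), hα1]
    rw [key, hDf, hDf']
    have hcast : (((α - 1 : ℕ) : ℂ) + 1) = (α : ℂ) := by
      rw [Nat.cast_sub hα]; push_cast; ring
    rw [hcast]
    simp only [hS]
    set c' : ℕ → ℂ := fun m => (((ascPochhammer ℕ (α + 1)).coeff m : ℕ) : ℂ) with hc'
    have hrec : ∀ k, c' (k + 1) = c k + (α : ℂ) * c (k + 1) := by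
      intro k
      have h2 : (ascPochhammer ℕ (α + 1)).coeff (k + 1)
          = (ascPochhammer ℕ α).coeff k + α * (ascPochhammer ℕ α).coeff (k + 1) := by
        rw [ascPochhammer_succ_right, mul_add, Polynomial.coeff_add,
          ← Polynomial.C_eq_natCast, Polynomial.coeff_mul_C, Polynomial.coeff_mul_X]
        simp only [Nat.cast_id]; ring
      simp only [hc', hc, h2]; push_cast; ring
    have hA : ∀ m ∈ range (α + 1), c m * (Dop^[m - 1 + 1] ψ) t = c m * (Dop^[m] ψ) t := by
      intro m _
      rcases Nat.eq_zero_or_pos m with h | h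
      · subst h; simp [hc, coeff_zero_asc α hα]
      · have : m - 1 + 1 = m := by omega
        rw [this]
    have hB : ∑ m ∈ range (α + 1), c (m + 1) * (Dop^[m] ψ) t
        = ∑ m ∈ range (α + 1), c m * (Dop^[m - 1] ψ) t := by
      rw [Finset.sum_range_succ, Finset.sum_range_succ']
      have h1 : c (α + 1) = 0 := by simp [hc, coeff_top_asc α]
      have h2 : c 0 = 0 := by simp [hc, coeff_zero_asc α hα]
      simp [h1, h2]
    have h0 : c' 0 = 0 := by simp [hc', coeff_zero_asc (α + 1) (by omega)]
    rw [Finset.sum_congr rfl hA,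
      Finset.sum_range_succ' (fun m => c' m * (Dop^[m - 1] ψ) t) (α + 1)]
    simp only [h0, zero_mul, add_zero, Nat.add_sub_cancel]
    have hterm : ∀ m ∈ range (α + 1), c' (m + 1) * (Dop^[m] ψ) t
        = c m * (Dop^[m] ψ) t + (α : ℂ) * (c (m + 1) * (Dop^[m] ψ) t) := fun m _ => by
      rw [hrec]; ring
    rw [Finset.sum_congr rfl hterm, Finset.sum_add_distrib, ← Finset.mul_sum, hB]
    ring

/-- For smooth `ψ` and every real `t`:
`∂^{α−1}(s^α ψ(s))(t) = t ∑_{m=1}^{α} c(α,m) ((∂t)^{m−1} ψ)(t)`,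
where `c(α,m)` are the unsigned Stirling numbers of the first kind
(coefficients of the rising factorial `ascPochhammer ℕ α`). -/
theorem stirling_iteratedDeriv_tpow_mul (α : ℕ) (hα : 1 ≤ α) (ψ : ℝ → ℂ)
    (hψ : ContDiff ℝ (⊤ : ℕ∞) ψ) (t : ℝ) :
    iteratedDeriv (α - 1) (fun s : ℝ => (s : ℂ) ^ α * ψ s) t
      = (t : ℂ) * ∑ m ∈ Finset.Icc 1 α,
          (((ascPochhammer ℕ α).coeff m : ℕ) : ℂ) *
            ((fun (g : ℝ → ℂ) (s : ℝ) => deriv (fun y : ℝ => y * g y) s)^[m - 1] ψ) t := by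
  have h := congrFun (aux_main α hα ψ (hψ.of_le (by simp))) t
  have hset : Finset.range (α + 1) = insert 0 (Finset.Icc 1 α) := by
    ext x; simp only [Finset.mem_range, Finset.mem_insert, Finset.mem_Icc]; omega
  rw [h, hset, Finset.sum_insert (by simp)]
  rw [coeff_zero_asc α hα]
  simp only [Nat.cast_zero, zero_mul, zero_add]
  rfl
end

section
/- Let λ ≥ 1 and n ≥ 1 be integers, K ⊆ ℝ^λ, b > 0, k ≥ 0, δ > 0 and ε be real numbers with ε > 2kδ. Let (Ω, Σ, ℙ) be a probability space and F₁, …, F_n : Ω × K → ℝ be such that: (i) almost surely, for every m the function F_m(ω, ·) is k-Lipschitz on K and satisfies |F_m(ω, x)| ≤ b for all x ∈ K; (ii) for every x ∈ K the real random variables F₁(·,x), …, F_n(·,x) are independent and all have the same distribution, with common mean μ(x) := E[F₁(·,x)]. Let N ⊆ K be a finite set with K ⊆ ⋃_{z∈N} closedBall(z, δ). Then ℙ{ ω : sup_{x∈K} |μ(x) − (1/n)∑_{m=1}^n F_m(ω,x)| > ε } ≤ 2·|N|·exp( −n(ε − 2kδ)²/(2b²) ). -/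
open MeasureTheory ProbabilityTheory
open scoped ENNReal NNReal
open Real


lemma hoeffding_core (p h : ℝ) (hp0 : 0 ≤ p) (hp1 : p ≤ 1) :
    (1 - p + p * exp h) * exp (-(p * h)) ≤ exp (h ^ 2 / 8) := by
  rcases eq_or_lt_of_le hp0 with hp0' | hp0'
  · simp only [← hp0', zero_mul, add_zero, sub_zero, neg_zero, exp_zero, one_mul, mul_one]
    exact one_le_exp (by positivity)
  rcases eq_or_lt_of_le hp1 with hp1' | hp1'
  · subst hp1'
    rw [show (1:ℝ) - 1 + 1 * exp h = exp h by ring, one_mul, ← exp_add]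
    exact exp_le_exp.2 (by nlinarith [sq_nonneg h])
  -- 0 < p < 1
  set q : ℝ := 1 - p with hq
  have hq0 : 0 < q := by simp [hq]; linarith
  have hgpos : ∀ x : ℝ, 0 < 1 - p + p * exp x := fun x => by
    have := exp_pos x; nlinarith
  -- ψ = derivative of φ
  set ψ : ℝ → ℝ := fun x => x / 4 + p - p * exp x / (1 - p + p * exp x) with hψ
  set φ : ℝ → ℝ := fun x => x ^ 2 / 8 + p * x - Real.log (1 - p + p * exp x) with hφ
  have hψd : ∀ x : ℝ, HasDerivAt ψ (1 / 4 - p * exp x * (1 - p) / (1 - p + p * exp x) ^ 2) x := by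
    intro x
    have hg : HasDerivAt (fun x : ℝ => 1 - p + p * exp x) (p * exp x) x := by
      simpa using ((Real.hasDerivAt_exp x).const_mul p).const_add (1 - p)
    have hnum : HasDerivAt (fun x : ℝ => p * exp x) (p * exp x) x :=
      (Real.hasDerivAt_exp x).const_mul p
    have hdiv := hnum.div hg (ne_of_gt (hgpos x))
    have hlin : HasDerivAt (fun x : ℝ => x / 4 + p) (1 / 4) x := by
      simpa using ((hasDerivAt_id x).div_const 4).add_const p
    have := hlin.sub hdiv
    refine this.congr_deriv ?_
    have hgx := hgpos x
    field_simp
    ring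
  have hφd : ∀ x : ℝ, HasDerivAt φ (ψ x) x := by
    intro x
    have hg : HasDerivAt (fun x : ℝ => 1 - p + p * exp x) (p * exp x) x := by
      simpa using ((Real.hasDerivAt_exp x).const_mul p).const_add (1 - p)
    have hlog := (Real.hasDerivAt_log (ne_of_gt (hgpos x))).comp x hg
    have hquad : HasDerivAt (fun x : ℝ => x ^ 2 / 8 + p * x) (x / 4 + p) x := by
      have h1 : HasDerivAt (fun x : ℝ => x ^ 2) (2 * x) x := by
        simpa using hasDerivAt_pow 2 x
      have := (h1.div_const 8).add ((hasDerivAt_id x).const_mul p)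
      refine this.congr_deriv ?_; ring
    have := hquad.sub hlog
    refine this.congr_deriv ?_
    simp [ψ, Function.comp]
    ring
  have hψmono : Monotone ψ := by
    apply monotone_of_deriv_nonneg
    · exact fun x => (hψd x).differentiableAt
    · intro x
      rw [(hψd x).deriv]
      have hgx := hgpos x
      have hex := exp_pos x
      rw [sub_nonneg, div_le_iff₀ (by positivity)]
      nlinarith [sq_nonneg (1 - p - p * exp x)]
  have hψ0 : ψ 0 = 0 := by simp [ψ]
  have hφ0 : φ 0 = 0 := by simp [φ]
  have hφnonneg : 0 ≤ φ h := by
    rcases le_or_gt 0 h with hh | hh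
    · have hmono : MonotoneOn φ (Set.Ici 0) := by
        apply monotoneOn_of_deriv_nonneg (convex_Ici 0)
        · exact fun x _ => (hφd x).differentiableAt.continuousAt.continuousWithinAt
        · exact fun x _ => (hφd x).differentiableAt.differentiableWithinAt
        · intro x hx
          rw [(hφd x).deriv, ← hψ0]
          rw [interior_Ici, Set.mem_Ioi] at hx
          exact hψmono hx.le
      have := hmono (Set.self_mem_Ici) (Set.mem_Ici.2 hh) hh
      rwa [hφ0] at this
    · have hmono : AntitoneOn φ (Set.Iic 0) := by
        apply antitoneOn_of_deriv_nonpos (convex_Iic 0)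
        · exact fun x _ => (hφd x).differentiableAt.continuousAt.continuousWithinAt
        · exact fun x _ => (hφd x).differentiableAt.differentiableWithinAt
        · intro x hx
          rw [(hφd x).deriv, ← hψ0]
          rw [interior_Iic, Set.mem_Iio] at hx
          exact hψmono hx.le
      have := hmono (Set.mem_Iic.2 hh.le) (Set.self_mem_Iic) hh.le
      rwa [hφ0] at this
  -- conclude
  have hL : (1 - p + p * exp h) * exp (-(p * h)) = exp (Real.log (1 - p + p * exp h) - p * h) := by
    rw [exp_sub, exp_log (hgpos h), div_eq_mul_inv, ← exp_neg]
  rw [hL]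
  apply exp_le_exp.2
  simp only [φ] at hφnonneg
  linarith

lemma integrable_exp_mul_of_bounded {Ω : Type*} [MeasurableSpace Ω] (P : Measure Ω)
    [IsProbabilityMeasure P] {X : Ω → ℝ} (hX : Measurable X) {a c : ℝ} (t : ℝ)
    (hb : ∀ᵐ ω ∂P, X ω ∈ Set.Icc a c) :
    Integrable (fun ω => exp (t * X ω)) P := by
  apply Integrable.mono' (integrable_const (exp (|t| * (|a| + |c|))))
    (hX.const_mul t).exp.aestronglyMeasurable
  filter_upwards [hb] with ω hω
  rw [Real.norm_eq_abs, abs_exp]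
  apply exp_le_exp.2
  calc t * X ω ≤ |t * X ω| := le_abs_self _
    _ = |t| * |X ω| := abs_mul _ _
    _ ≤ |t| * (|a| + |c|) := by
        apply mul_le_mul_of_nonneg_left _ (abs_nonneg t)
        rcases hω with ⟨h1, h2⟩
        rcases abs_cases (X ω) with ⟨he, _⟩ | ⟨he, _⟩ <;> rcases abs_cases a with ⟨ha,_⟩|⟨ha,_⟩ <;>
          rcases abs_cases c with ⟨hc,_⟩|⟨hc,_⟩ <;> linarith [abs_nonneg a, abs_nonneg c]

lemma hoeffding_mgf {Ω : Type*} [MeasurableSpace Ω] (P : Measure Ω)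
    [IsProbabilityMeasure P] {X : Ω → ℝ} (hX : Measurable X) (a c t : ℝ)
    (hbound : ∀ᵐ ω ∂P, X ω ∈ Set.Icc a c) (hmean : ∫ ω, X ω ∂P = 0) :
    mgf X P t ≤ exp (t ^ 2 * (c - a) ^ 2 / 8) := by
  have hXint : Integrable X P := by
    apply Integrable.mono' (integrable_const (|a| + |c|)) hX.aestronglyMeasurable
    filter_upwards [hbound] with ω hω
    rw [Real.norm_eq_abs]
    rcases hω with ⟨h1, h2⟩
    rcases abs_cases (X ω) with ⟨he, _⟩ | ⟨he, _⟩ <;> rcases abs_cases a with ⟨ha,_⟩|⟨ha,_⟩ <;>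
      rcases abs_cases c with ⟨hc,_⟩|⟨hc,_⟩ <;> linarith [abs_nonneg a, abs_nonneg c]
  have hac : a ≤ c := by
    have hne : ∃ ω, X ω ∈ Set.Icc a c := (hbound.exists)
    obtain ⟨ω, h1, h2⟩ := hne
    linarith
  have ha0 : a ≤ 0 := by
    by_contra hcon
    push_neg at hcon
    have : a ≤ ∫ ω, X ω ∂P := by
      rw [show a = ∫ _ω, a ∂P by simp]
      exact integral_mono_ae (integrable_const a) hXint (hbound.mono fun ω h => h.1)
    linarith [hmean ▸ this]
  have hc0 : 0 ≤ c := by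
    by_contra hcon
    push_neg at hcon
    have : ∫ ω, X ω ∂P ≤ c := by
      rw [show c = ∫ _ω, c ∂P by simp]
      exact integral_mono_ae hXint (integrable_const c) (hbound.mono fun ω h => h.2)
    linarith [hmean ▸ this]
  rcases eq_or_lt_of_le hac with heq | hlt
  · -- a = c = 0, X = 0 a.e.
    have ha : a = 0 := le_antisymm ha0 (heq ▸ hc0)
    have hc : c = 0 := heq ▸ ha
    have : mgf X P t = ∫ ω, exp (t * X ω) ∂P := rfl
    rw [this]
    have : ∫ ω, exp (t * X ω) ∂P = ∫ _ω, (1:ℝ) ∂P := by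
      apply integral_congr_ae
      filter_upwards [hbound] with ω hω
      have : X ω = 0 := le_antisymm (hc ▸ hω.2) (ha ▸ hω.1)
      simp [this]
    rw [this, integral_const, probReal_univ]
    simp only [ENNReal.toReal_one, smul_eq_mul, one_mul]
    exact one_le_exp (by positivity)
  -- a < c
  set p : ℝ := -a / (c - a) with hp
  have hca : 0 < c - a := by linarith
  have hp0 : 0 ≤ p := div_nonneg (by linarith) hca.le
  have hp1 : p ≤ 1 := by
    rw [hp, div_le_one hca]; linarith
  set h : ℝ := t * (c - a) with hh
  set α : ℝ := exp (t * a) with hα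
  set γ : ℝ := exp (t * c) with hγ
  have hγα : γ = α * exp h := by rw [hγ, hα, hh, ← exp_add]; ring_nf
  have hkey : mgf X P t ≤ (c * α - a * γ) / (c - a) := by
    have hmono : ∀ᵐ ω ∂P, exp (t * X ω) ≤
        (c * α - a * γ) / (c - a) + ((γ - α) / (c - a)) * X ω := by
      filter_upwards [hbound] with ω hω
      rcases hω with ⟨h1, h2⟩
      set x := X ω
      have hl1 : (0:ℝ) ≤ (c - x) / (c - a) := div_nonneg (by linarith) hca.le
      have hl2 : (0:ℝ) ≤ (x - a) / (c - a) := div_nonneg (by linarith) hca.le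
      have hsum : (c - x) / (c - a) + (x - a) / (c - a) = 1 := by
        field_simp
        ring
      have hcv := convexOn_exp.2 (Set.mem_univ (t * a)) (Set.mem_univ (t * c)) hl1 hl2 hsum
      simp only [smul_eq_mul] at hcv
      have hid : (c - x) / (c - a) * (t * a) + (x - a) / (c - a) * (t * c) = t * x := by
        field_simp; ring
      rw [hid] at hcv
      calc exp (t * x) ≤ (c - x) / (c - a) * α + (x - a) / (c - a) * γ := hcv
        _ = (c * α - a * γ) / (c - a) + ((γ - α) / (c - a)) * x := by
            field_simp; ring
    have hint2 : Integrable
        (fun ω => (c * α - a * γ) / (c - a) + ((γ - α) / (c - a)) * X ω) P :=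
      (integrable_const _).add (hXint.const_mul _)
    calc mgf X P t = ∫ ω, exp (t * X ω) ∂P := rfl
      _ ≤ ∫ ω, ((c * α - a * γ) / (c - a) + ((γ - α) / (c - a)) * X ω) ∂P :=
          integral_mono_ae (integrable_exp_mul_of_bounded P hX t hbound) hint2 hmono
      _ = (c * α - a * γ) / (c - a) := by
          rw [integral_add (integrable_const _) (hXint.const_mul _), integral_const,
            integral_const_mul, hmean]
          simp
  have hform : (c * α - a * γ) / (c - a) = (1 - p + p * exp h) * exp (-(p * h)) := by
    have hαph : exp (-(p * h)) = α := by
      rw [hα]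
      congr 1
      rw [hp, hh]
      field_simp
    rw [hαph, hγα, hp]
    field_simp
    ring
  have hh2 : h ^ 2 / 8 = t ^ 2 * (c - a) ^ 2 / 8 := by rw [hh]; ring
  calc mgf X P t ≤ (c * α - a * γ) / (c - a) := hkey
    _ = (1 - p + p * exp h) * exp (-(p * h)) := hform
    _ ≤ exp (h ^ 2 / 8) := hoeffding_core p h hp0 hp1
    _ = exp (t ^ 2 * (c - a) ^ 2 / 8) := by rw [hh2]

lemma hoeffding_one_sided {Ω : Type*} [MeasurableSpace Ω] (P : Measure Ω)
    [IsProbabilityMeasure P] {n : ℕ} (X : Fin n → Ω → ℝ) (hmeas : ∀ m, Measurable (X m))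
    (hindep : iIndepFun X P)
    (a c b s : ℝ) (hb : 0 < b) (hs : 0 < s) (hac : a ≤ c) (hca : c - a ≤ 2 * b)
    (hmean : ∀ m, ∫ ω, X m ω ∂P = 0)
    (hbound : ∀ᵐ ω ∂P, ∀ m, X m ω ∈ Set.Icc a c) :
    P {ω | (n : ℝ) * s ≤ ∑ m, X m ω} ≤
      ENNReal.ofReal (exp (-(n : ℝ) * s ^ 2 / (2 * b ^ 2))) := by
  set t : ℝ := s / b ^ 2 with ht_def
  have ht : 0 ≤ t := by positivity
  have hbm : ∀ m, ∀ᵐ ω ∂P, X m ω ∈ Set.Icc a c := fun m => hbound.mono fun ω h => h m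
  have hintm : ∀ m, Integrable (fun ω => exp (t * X m ω)) P :=
    fun m => integrable_exp_mul_of_bounded P (hmeas m) t (hbm m)
  have hintS : Integrable (fun ω => exp (t * (∑ m, X m) ω)) P :=
    hindep.integrable_exp_mul_sum hmeas fun i _ => hintm i
  have hmgf : mgf (∑ m, X m) P t = ∏ m, mgf (X m) P t := hindep.mgf_sum hmeas Finset.univ
  have hmgfi : ∀ m, mgf (X m) P t ≤ exp (t ^ 2 * b ^ 2 / 2) := fun m => by
    refine (hoeffding_mgf P (hmeas m) a c t (hbm m) (hmean m)).trans (exp_le_exp.2 ?_)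
    nlinarith [sq_nonneg t, sq_nonneg (c - a), mul_le_mul_of_nonneg_left
      (mul_self_le_mul_self (by linarith : (0:ℝ) ≤ c - a) hca) (sq_nonneg t)]
  have hprod : mgf (∑ m, X m) P t ≤ exp ((n : ℝ) * (t ^ 2 * b ^ 2 / 2)) := by
    rw [hmgf]
    calc ∏ m, mgf (X m) P t ≤ ∏ _m : Fin n, exp (t ^ 2 * b ^ 2 / 2) :=
          Finset.prod_le_prod (fun i _ => mgf_nonneg) fun i _ => hmgfi i
      _ = exp ((n : ℝ) * (t ^ 2 * b ^ 2 / 2)) := by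
          rw [Finset.prod_const, ← exp_nat_mul, Finset.card_univ, Fintype.card_fin]
  have hch := measure_ge_le_exp_mul_mgf ((n : ℝ) * s) ht hintS
  have hPne : P {ω | (n : ℝ) * s ≤ (∑ m, X m) ω} ≠ ⊤ := measure_ne_top _ _
  have hset : {ω | (n : ℝ) * s ≤ ∑ m, X m ω} = {ω | (n : ℝ) * s ≤ (∑ m, X m) ω} := by
    ext ω; simp [Finset.sum_apply]
  rw [hset, ENNReal.le_ofReal_iff_toReal_le hPne (exp_pos _).le]
  calc (P {ω | (n : ℝ) * s ≤ (∑ m, X m) ω}).toReal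
      ≤ exp (-t * ((n : ℝ) * s)) * mgf (∑ m, X m) P t := hch
    _ ≤ exp (-t * ((n : ℝ) * s)) * exp ((n : ℝ) * (t ^ 2 * b ^ 2 / 2)) := by
        exact mul_le_mul_of_nonneg_left hprod (exp_pos _).le
    _ = exp (-(n : ℝ) * s ^ 2 / (2 * b ^ 2)) := by
        rw [← exp_add]
        congr 1
        rw [ht_def]
        field_simp
        ring

lemma hoeffding_two_sided {Ω : Type*} [MeasurableSpace Ω] (P : Measure Ω)
    [IsProbabilityMeasure P] {n : ℕ} (X : Fin n → Ω → ℝ) (hmeas : ∀ m, Measurable (X m))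
    (hindep : iIndepFun X P)
    (a c b s : ℝ) (hb : 0 < b) (hs : 0 < s) (hac : a ≤ c) (hca : c - a ≤ 2 * b)
    (hmean : ∀ m, ∫ ω, X m ω ∂P = 0)
    (hbound : ∀ᵐ ω ∂P, ∀ m, X m ω ∈ Set.Icc a c) :
    P {ω | (n : ℝ) * s < |∑ m, X m ω|} ≤
      ENNReal.ofReal (2 * exp (-(n : ℝ) * s ^ 2 / (2 * b ^ 2))) := by
  have hsub : {ω | (n : ℝ) * s < |∑ m, X m ω|} ⊆
      {ω | (n : ℝ) * s ≤ ∑ m, X m ω} ∪ {ω | (n : ℝ) * s ≤ ∑ m, (fun ω' => -X m ω') ω} := by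
    intro ω hω
    simp only [Set.mem_setOf_eq] at hω
    rcases abs_cases (∑ m, X m ω) with ⟨he, _⟩ | ⟨he, _⟩
    · left; exact Set.mem_setOf_eq ▸ (he ▸ hω).le
    · right
      simp only [Set.mem_setOf_eq, ← Finset.sum_neg_distrib]
      rw [he] at hω
      rw [← Finset.sum_neg_distrib] at hω
      exact hω.le
  have h1 := hoeffding_one_sided P X hmeas hindep a c b s hb hs hac hca hmean hbound
  have h2 : P {ω | (n : ℝ) * s ≤ ∑ m, (fun ω' => -X m ω') ω} ≤
      ENNReal.ofReal (exp (-(n : ℝ) * s ^ 2 / (2 * b ^ 2))) := by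
    apply hoeffding_one_sided P (fun m ω => -X m ω) (fun m => (hmeas m).neg)
      (hindep.comp (fun _ => Neg.neg) fun _ => measurable_neg) (-c) (-a) b s hb hs
      (by linarith) (by linarith)
    · intro m; rw [integral_neg, hmean m, neg_zero]
    · filter_upwards [hbound] with ω hω m
      exact ⟨neg_le_neg (hω m).2, neg_le_neg (hω m).1⟩
  calc P {ω | (n : ℝ) * s < |∑ m, X m ω|} ≤
      P ({ω | (n : ℝ) * s ≤ ∑ m, X m ω} ∪ {ω | (n : ℝ) * s ≤ ∑ m, (fun ω' => -X m ω') ω}) :=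
        measure_mono hsub
    _ ≤ P {ω | (n : ℝ) * s ≤ ∑ m, X m ω} +
        P {ω | (n : ℝ) * s ≤ ∑ m, (fun ω' => -X m ω') ω} := measure_union_le _ _
    _ ≤ ENNReal.ofReal (exp (-(n : ℝ) * s ^ 2 / (2 * b ^ 2))) +
        ENNReal.ofReal (exp (-(n : ℝ) * s ^ 2 / (2 * b ^ 2))) := add_le_add h1 h2
    _ = ENNReal.ofReal (2 * exp (-(n : ℝ) * s ^ 2 / (2 * b ^ 2))) := by
        rw [← ENNReal.ofReal_add (exp_pos _).le (exp_pos _).le]; congr 1; ring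

/-- Uniform concentration over a δ-net: if `F₁,…,F_n` are i.i.d. random fields on `K ⊆ ℝ^λ`
which are a.s. `k`-Lipschitz and bounded by `b`, and `N` is a finite `δ`-net of `K`, then
`P{ sup_{x∈K} |E F₁(x) − n⁻¹∑ F_m(x)| > ε } ≤ 2|N| exp(−n(ε−2kδ)²/(2b²))`
whenever `ε > 2kδ`. -/
theorem uniform_concentration_over_net
    (lam n : ℕ) (hlam : 1 ≤ lam) (hn : 1 ≤ n)
    (K : Set (EuclideanSpace ℝ (Fin lam)))
    (b k δ ε : ℝ) (hb : 0 < b) (hk : 0 ≤ k) (hδ : 0 < δ) (hε : 2 * k * δ < ε)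
    {Ω : Type*} [MeasurableSpace Ω] (P : Measure Ω) [IsProbabilityMeasure P]
    (F : Fin n → Ω → EuclideanSpace ℝ (Fin lam) → ℝ)
    (hFmeas : ∀ m x, Measurable fun ω => F m ω x)
    (hF : ∀ᵐ ω ∂P, ∀ m : Fin n,
        LipschitzOnWith k.toNNReal (F m ω) K ∧ ∀ x ∈ K, |F m ω x| ≤ b)
    (hindep : ∀ x ∈ K,
        iIndepFun (fun m ω => F m ω x) P)
    (hident : ∀ x ∈ K, ∀ m : Fin n,
        IdentDistrib (fun ω => F m ω x) (fun ω => F ⟨0, hn⟩ ω x) P P)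
    (N : Finset (EuclideanSpace ℝ (Fin lam))) (hNK : (N : Set (EuclideanSpace ℝ (Fin lam))) ⊆ K)
    (hcover : K ⊆ ⋃ z ∈ N, Metric.closedBall z δ) :
    P {ω | ε < ⨆ x : K,
        |(∫ ω' , F ⟨0, hn⟩ ω' (x : EuclideanSpace ℝ (Fin lam)) ∂P)
          - (1 / n) * ∑ m : Fin n, F m ω (x : EuclideanSpace ℝ (Fin lam))|}
      ≤ ENNReal.ofReal
          (2 * N.card * Real.exp (-(n : ℝ) * (ε - 2 * k * δ) ^ 2 / (2 * b ^ 2))) := by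
  classical
  set μ : EuclideanSpace ℝ (Fin lam) → ℝ := fun x => ∫ ω', F ⟨0, hn⟩ ω' x ∂P with hμ
  set s : ℝ := ε - 2 * k * δ with hs_def
  have hs : 0 < s := by simp only [hs_def]; linarith
  have hkδ : (0:ℝ) ≤ 2 * k * δ := by positivity
  have hε0 : 0 < ε := lt_of_le_of_lt hkδ hε
  have hnR : (0:ℝ) < n := by exact_mod_cast hn
  have hGae : ∀ᵐ ω ∂P, ∀ m : Fin n,
      LipschitzOnWith k.toNNReal (F m ω) K ∧ ∀ x ∈ K, |F m ω x| ≤ b := hF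
  have hbadzero : P {ω | ¬ ∀ m : Fin n,
      LipschitzOnWith k.toNNReal (F m ω) K ∧ ∀ x ∈ K, |F m ω x| ≤ b} = 0 := by
    exact ae_iff.mp hGae
  have hFb : ∀ x ∈ K, ∀ m : Fin n, ∀ᵐ ω ∂P, |F m ω x| ≤ b :=
    fun x hx m => hGae.mono fun ω hω => (hω m).2 x hx
  have hFint : ∀ x ∈ K, ∀ m : Fin n, Integrable (fun ω => F m ω x) P := fun x hx m =>
    (integrable_const b).mono' (hFmeas m x).aestronglyMeasurable
      ((hFb x hx m).mono fun ω h => by rwa [Real.norm_eq_abs])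
  have hμLip : ∀ x ∈ K, ∀ z ∈ K, |μ x - μ z| ≤ k * dist x z := by
    intro x hx z hz
    have hsub : μ x - μ z = ∫ ω, (F ⟨0, hn⟩ ω x - F ⟨0, hn⟩ ω z) ∂P :=
      (integral_sub (hFint x hx _) (hFint z hz _)).symm
    rw [hsub, ← Real.norm_eq_abs]
    have hbd : ∀ᵐ ω ∂P, ‖F ⟨0, hn⟩ ω x - F ⟨0, hn⟩ ω z‖ ≤ k * dist x z := by
      filter_upwards [hGae] with ω hω
      have h1 := (hω ⟨0, hn⟩).1.dist_le_mul x hx z hz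
      rw [Real.dist_eq] at h1
      rwa [Real.norm_eq_abs, ← Real.coe_toNNReal k hk]
    have := norm_integral_le_of_norm_le_const hbd
    simpa [measure_univ] using this
  -- pointwise net bound on the good event
  have hnet : ∀ ω, (∀ m : Fin n,
      LipschitzOnWith k.toNNReal (F m ω) K ∧ ∀ x ∈ K, |F m ω x| ≤ b) →
      ∀ x ∈ K, ∀ z ∈ N, dist x z ≤ δ →
      |μ x - (1 / (n:ℝ)) * ∑ m, F m ω x| ≤
        |μ z - (1 / (n:ℝ)) * ∑ m, F m ω z| + 2 * k * δ := by
    intro ω hω x hx z hzN hdist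
    have hzK : z ∈ K := hNK hzN
    have h1 : |μ x - μ z| ≤ k * δ :=
      (hμLip x hx z hzK).trans (mul_le_mul_of_nonneg_left hdist hk)
    have h2 : |(1 / (n:ℝ)) * ∑ m, F m ω z - (1 / (n:ℝ)) * ∑ m, F m ω x| ≤ k * δ := by
      rw [← mul_sub, ← Finset.sum_sub_distrib, abs_mul, abs_of_pos (by positivity : (0:ℝ) < 1/(n:ℝ))]
      have hterm : ∀ m : Fin n, |F m ω z - F m ω x| ≤ k * δ := by
        intro m
        have := (hω m).1.dist_le_mul z hzK x hx
        rw [Real.dist_eq, Real.coe_toNNReal k hk] at this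
        refine this.trans ?_
        rw [dist_comm]
        exact mul_le_mul_of_nonneg_left hdist hk
      calc (1 / (n:ℝ)) * |∑ m, (F m ω z - F m ω x)| ≤
          (1 / (n:ℝ)) * ∑ m, |F m ω z - F m ω x| := by
            apply mul_le_mul_of_nonneg_left (Finset.abs_sum_le_sum_abs _ _) (by positivity)
        _ ≤ (1 / (n:ℝ)) * ∑ _m : Fin n, (k * δ) := by
            apply mul_le_mul_of_nonneg_left (Finset.sum_le_sum fun m _ => hterm m) (by positivity)
        _ = k * δ := by
            rw [Finset.sum_const, Finset.card_univ, Fintype.card_fin, nsmul_eq_mul]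
            field_simp
    have := abs_add_le (μ x - μ z + (μ z - (1 / (n:ℝ)) * ∑ m, F m ω z))
      ((1 / (n:ℝ)) * ∑ m, F m ω z - (1 / (n:ℝ)) * ∑ m, F m ω x)
    have h3 := abs_add_le (μ x - μ z) (μ z - (1 / (n:ℝ)) * ∑ m, F m ω z)
    have heq : μ x - (1 / (n:ℝ)) * ∑ m, F m ω x =
        μ x - μ z + (μ z - (1 / (n:ℝ)) * ∑ m, F m ω z) +
          ((1 / (n:ℝ)) * ∑ m, F m ω z - (1 / (n:ℝ)) * ∑ m, F m ω x) := by ring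
    rw [heq]
    calc |_ + _| ≤ |μ x - μ z + (μ z - (1 / (n:ℝ)) * ∑ m, F m ω z)| +
          |(1 / (n:ℝ)) * ∑ m, F m ω z - (1 / (n:ℝ)) * ∑ m, F m ω x| := this
      _ ≤ |μ x - μ z| + |μ z - (1 / (n:ℝ)) * ∑ m, F m ω z| +
          |(1 / (n:ℝ)) * ∑ m, F m ω z - (1 / (n:ℝ)) * ∑ m, F m ω x| := by linarith
      _ ≤ |μ z - (1 / (n:ℝ)) * ∑ m, F m ω z| + 2 * k * δ := by linarith
  -- the per-net-point events
  set A : EuclideanSpace ℝ (Fin lam) → Set Ω :=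
    fun z => {ω | (n:ℝ) * s < |∑ m, (μ z - F m ω z)|} with hA
  by_cases hKne : K.Nonempty
  · -- main case
    have hincl : {ω | ε < ⨆ x : K, |μ x - (1 / (n:ℝ)) * ∑ m, F m ω x|} ⊆
        (⋃ z ∈ N, A z) ∪ {ω | ¬ ∀ m : Fin n,
          LipschitzOnWith k.toNNReal (F m ω) K ∧ ∀ x ∈ K, |F m ω x| ≤ b} := by
      intro ω hω
      by_cases hg : ∀ m : Fin n,
          LipschitzOnWith k.toNNReal (F m ω) K ∧ ∀ x ∈ K, |F m ω x| ≤ b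
      swap
      · right; exact hg
      left
      simp only [Set.mem_setOf_eq] at hω
      by_contra hnot
      simp only [Set.mem_iUnion, not_exists] at hnot
      have hzb : ∀ z ∈ N, |μ z - (1 / (n:ℝ)) * ∑ m, F m ω z| ≤ s := by
        intro z hzN
        have h1 : ¬ ((n:ℝ) * s < |∑ m, (μ z - F m ω z)|) := by
          intro hcon
          exact hnot z hzN hcon
        push_neg at h1
        have hid : μ z - (1 / (n:ℝ)) * ∑ m, F m ω z =
            (1 / (n:ℝ)) * ∑ m, (μ z - F m ω z) := by
          rw [Finset.sum_sub_distrib, Finset.sum_const, Finset.card_univ, Fintype.card_fin,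
            nsmul_eq_mul]
          field_simp
        rw [hid, abs_mul, abs_of_pos (by positivity : (0:ℝ) < 1/(n:ℝ))]
        calc (1 / (n:ℝ)) * |∑ m, (μ z - F m ω z)| ≤ (1 / (n:ℝ)) * ((n:ℝ) * s) := by
              apply mul_le_mul_of_nonneg_left h1 (by positivity)
          _ = s := by field_simp
      haveI := hKne.to_subtype
      have hsup : (⨆ x : K, |μ x - (1 / (n:ℝ)) * ∑ m, F m ω x|) ≤ ε := by
        apply ciSup_le
        rintro ⟨x, hx⟩
        obtain ⟨z, hzN, hxz⟩ : ∃ z ∈ N, x ∈ Metric.closedBall z δ := by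
          simpa using hcover hx
        have hd : dist x z ≤ δ := Metric.mem_closedBall.1 hxz
        calc |μ x - (1 / (n:ℝ)) * ∑ m, F m ω x| ≤
            |μ z - (1 / (n:ℝ)) * ∑ m, F m ω z| + 2 * k * δ := hnet ω hg x hx z hzN hd
          _ ≤ s + 2 * k * δ := by linarith [hzb z hzN]
          _ = ε := by rw [hs_def]; ring
      linarith
    have hAz : ∀ z ∈ N, P (A z) ≤
        ENNReal.ofReal (2 * exp (-(n:ℝ) * s ^ 2 / (2 * b ^ 2))) := by
      intro z hzN
      have hzK : z ∈ K := hNK hzN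
      have hmean : ∀ m : Fin n, ∫ ω, (μ z - F m ω z) ∂P = 0 := by
        intro m
        rw [integral_sub (integrable_const _) (hFint z hzK m), integral_const]
        have hintegral := (hident z hzK m).integral_eq
        simp only [probReal_univ, ENNReal.toReal_one, one_smul]
        rw [hintegral]
        simp [hμ]
      have hbound : ∀ᵐ ω ∂P, ∀ m : Fin n, μ z - F m ω z ∈ Set.Icc (μ z - b) (μ z + b) := by
        filter_upwards [hGae] with ω hω m
        have h := (hω m).2 z hzK
        rw [abs_le] at h
        exact ⟨by linarith [h.2], by linarith [h.1]⟩
      exact hoeffding_two_sided P (fun m ω => μ z - F m ω z)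
        (fun m => measurable_const.sub (hFmeas m z))
        ((hindep z hzK).comp (fun _ y => μ z - y)
          (fun _ => measurable_const.sub measurable_id))
        (μ z - b) (μ z + b) b s hb hs (by linarith) (by linarith) hmean hbound
    calc P {ω | ε < ⨆ x : K, |μ x - (1 / (n:ℝ)) * ∑ m, F m ω x|}
        ≤ P ((⋃ z ∈ N, A z) ∪ {ω | ¬ ∀ m : Fin n,
            LipschitzOnWith k.toNNReal (F m ω) K ∧ ∀ x ∈ K, |F m ω x| ≤ b}) :=
          measure_mono hincl
      _ ≤ P (⋃ z ∈ N, A z) + P {ω | ¬ ∀ m : Fin n,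
            LipschitzOnWith k.toNNReal (F m ω) K ∧ ∀ x ∈ K, |F m ω x| ≤ b} :=
          measure_union_le _ _
      _ = P (⋃ z ∈ N, A z) := by rw [hbadzero, add_zero]
      _ ≤ ∑ z ∈ N, P (A z) := measure_biUnion_finset_le N A
      _ ≤ ∑ _z ∈ N, ENNReal.ofReal (2 * exp (-(n:ℝ) * s ^ 2 / (2 * b ^ 2))) :=
          Finset.sum_le_sum hAz
      _ = N.card • ENNReal.ofReal (2 * exp (-(n:ℝ) * s ^ 2 / (2 * b ^ 2))) :=
          Finset.sum_const _
      _ = ENNReal.ofReal (2 * N.card * exp (-(n:ℝ) * s ^ 2 / (2 * b ^ 2))) := by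
          rw [nsmul_eq_mul, ← ENNReal.ofReal_natCast N.card,
            ← ENNReal.ofReal_mul (Nat.cast_nonneg _)]
          congr 1
          ring
  · -- K empty
    have hKempty : K = ∅ := Set.not_nonempty_iff_eq_empty.mp hKne
    haveI : IsEmpty ↥K := by rw [hKempty]; exact Set.isEmpty_coe_sort.mpr rfl
    have hset : {ω : Ω | ε < ⨆ x : K, |μ x - (1 / (n:ℝ)) * ∑ m, F m ω x|} = ∅ := by
      ext ω
      simp only [Set.mem_setOf_eq, Set.mem_empty_iff_false, iff_false, not_lt]
      rw [Real.iSup_of_isEmpty]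
      linarith
    rw [hset, measure_empty]
    exact zero_le
end
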